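/- arXiv:1309.5985 — 11 statements merged into one kernel-verified Lean document; each statement's English description precedes it below -/
import Mathlib

section
/- Let S = {s_1, s_2, …, s_k} be a set of k distinct positive integers with s_1 < s_2 < … < s_k. If s_i > s_1 + s_2 + ⋯ + s_{i-1} for every i with 2 ≤ i ≤ k, then CM(S) = k. -/
/-- The Cookie Monster number of a finite set `S` of jar contents: the least `n`
for which there exist positive move amounts `a_1, …, a_n` such that every `s ∈ S`
is the sum of a subset of the move amounts. -/
noncomputable def CM (S : Finset ℕ) : ℕ :=
  sInf {n : ℕ | ∃ a : Fin n → ℕ, (∀ i, 0 < a i) ∧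
    ∀ s ∈ S, ∃ I : Finset (Fin n), ∑ i ∈ I, a i = s}

/-!
If the amounts `a` realise every `s i` as a subset sum `∑ x ∈ I i, a x`, then each `I i` contains
a move lying in no earlier `I j`: otherwise `s i` would be at most `∑ j < i, s j`. Choosing such
a move for every `i` gives an injection from the jars into the moves, so at least `k` moves are
needed; `k` moves suffice by emptying one jar per move.
-/

open Finset

section Superincreasing

variable {ι α M : Type*} [AddCommMonoid M] [PartialOrder M] [CanonicallyOrderedAdd M]

theorem Finset.sum_biUnion_le [DecidableEq α] (t : Finset ι)
    (I : ι → Finset α) (f : α → M) :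
    ∑ x ∈ t.biUnion I, f x ≤ ∑ i ∈ t, ∑ x ∈ I i, f x := by
  rw [← sup_eq_biUnion]
  exact t.apply_sup_le_sum (f := fun J ↦ ∑ x ∈ J, f x) sum_empty
    (le_self_add.trans_eq sum_union_inter)

variable [Fintype ι] [LinearOrder ι]

def Superincreasing (s : ι → M) : Prop :=
  ∀ i, ∑ j ∈ univ.filter (· < i), s j < s i

theorem Superincreasing.exists_mem_notMem_biUnion [DecidableEq α]
    {s : ι → M} (hs : Superincreasing s) {a : α → M} {I : ι → Finset α}
    (hI : ∀ i, ∑ x ∈ I i, a x = s i) (i : ι) :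
    ∃ x ∈ I i, x ∉ (univ.filter (· < i)).biUnion I := by
  by_contra! hsub
  refine (hs i).not_ge ?_
  calc s i = ∑ x ∈ I i, a x := (hI i).symm
    _ ≤ ∑ x ∈ (univ.filter (· < i)).biUnion I, a x := sum_le_sum_of_subset hsub
    _ ≤ ∑ j ∈ univ.filter (· < i), ∑ x ∈ I j, a x := sum_biUnion_le _ _ _
    _ = ∑ j ∈ univ.filter (· < i), s j := by simp only [hI]

theorem card_le_card_of_forall_exists_notMem_biUnion [Fintype α] [DecidableEq α]
    (I : ι → Finset α) (h : ∀ i, ∃ x ∈ I i, x ∉ (univ.filter (· < i)).biUnion I) :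
    Fintype.card ι ≤ Fintype.card α := by
  choose x hxI hxnew using h
  refine Fintype.card_le_of_injective x fun i j hij ↦ ?_
  by_contra hne
  rcases lt_or_gt_of_ne hne with hlt | hlt
  · exact hxnew j (mem_biUnion.2 ⟨i, by simpa using hlt, hij ▸ hxI i⟩)
  · exact hxnew i (mem_biUnion.2 ⟨j, by simpa using hlt, hij.symm ▸ hxI j⟩)

theorem Superincreasing.card_le [Fintype α] {s : ι → M}
    (hs : Superincreasing s) (a : α → M) (h : ∀ i, ∃ I : Finset α, ∑ x ∈ I, a x = s i) :
    Fintype.card ι ≤ Fintype.card α := by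
  classical
  choose I hI using h
  exact card_le_card_of_forall_exists_notMem_biUnion I (hs.exists_mem_notMem_biUnion hI)

end Superincreasing

section CookieMonster

variable {S : Finset ℕ}

theorem exists_subset_sum_cover_card (hS : ∀ s ∈ S, 0 < s) :
    ∃ a : Fin #S → ℕ, (∀ i, 0 < a i) ∧ ∀ s ∈ S, ∃ I : Finset (Fin #S), ∑ i ∈ I, a i = s :=
  ⟨fun i ↦ S.equivFin.symm i, fun i ↦ hS _ (S.equivFin.symm i).2,
    fun s hs ↦ ⟨{S.equivFin ⟨s, hs⟩}, by simp⟩⟩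

theorem CM_le_card (hS : ∀ s ∈ S, 0 < s) : CM S ≤ #S :=
  Nat.sInf_le (exists_subset_sum_cover_card hS)

theorem exists_subset_sum_cover_CM (hS : ∀ s ∈ S, 0 < s) :
    ∃ a : Fin (CM S) → ℕ, (∀ i, 0 < a i) ∧
      ∀ s ∈ S, ∃ I : Finset (Fin (CM S)), ∑ i ∈ I, a i = s :=
  Nat.sInf_mem (s := {n | ∃ a : Fin n → ℕ, (∀ i, 0 < a i) ∧
    ∀ s ∈ S, ∃ I : Finset (Fin n), ∑ i ∈ I, a i = s}) ⟨_, exists_subset_sum_cover_card hS⟩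

end CookieMonster

theorem cm_of_superincreasing_general (k : ℕ) (s : Fin k → ℕ)
    (hpos : ∀ i, 0 < s i)
    (hsup : ∀ i : Fin k, 1 ≤ (i : ℕ) →
      ∑ j ∈ Finset.univ.filter (· < i), s j < s i) :
    CM (Finset.image s Finset.univ) = k := by
  have hS : ∀ x ∈ image s univ, 0 < x := forall_mem_image.2 fun i _ ↦ hpos i
  have hs : Superincreasing s := fun i ↦ by
    rcases Nat.eq_zero_or_pos i with h0 | h1
    · have : univ.filter (· < i) = ∅ := filter_false_of_mem fun j _ ↦ by simp [Fin.lt_def, h0]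
      simpa [this] using hpos i
    · exact hsup i h1
  obtain ⟨a, -, ha⟩ := exists_subset_sum_cover_CM hS
  refine le_antisymm ((CM_le_card hS).trans (card_image_le.trans (card_fin k).le)) ?_
  simpa using hs.card_le a fun i ↦ ha (s i) (mem_image_of_mem s (mem_univ i))

/-- If each jar (beyond the first) contains more cookies than all smaller jars
combined, then the Cookie Monster number equals the number of jars. -/
theorem cm_of_superincreasing (k : ℕ) (hk : 0 < k) (s : Fin k → ℕ)
    (hmono : StrictMono s) (hpos : ∀ i, 0 < s i)
    (hsup : ∀ i : Fin k, 1 ≤ (i : ℕ) →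
      ∑ j ∈ Finset.univ.filter (· < i), s j < s i) :
    CM (Finset.image s Finset.univ) = k :=
  cm_of_superincreasing_general k s hpos hsup
end

section
/- For every positive integer k, the set S = {1, 2, 3, …, k} of the first k positive integers satisfies CM(S) = ⌊log₂ k⌋ + 1; in particular the lower bound ⌊log₂ k⌋ + 1 on the Cookie Monster number of a set of k jars is attained. -/
/-!
With `n` moves there are only `2 ^ n` subsets of moves, and one of them has the empty sum `0`,
which is no jar; so `k` jars force `k < 2 ^ n`. For `{1, …, k}` the moves
`1, 2, 4, …, 2 ^ ⌊log₂ k⌋` reach every jar by binary expansion.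
-/

open Finset

section SubsetSums

variable {ι M : Type*} [Fintype ι] [AddCommMonoid M] [DecidableEq M]

def subsetSums (a : ι → M) : Finset M :=
  univ.image fun I : Finset ι => ∑ i ∈ I, a i

theorem mem_subsetSums {a : ι → M} {s : M} :
    s ∈ subsetSums a ↔ ∃ I : Finset ι, ∑ i ∈ I, a i = s := by
  simp [subsetSums]

theorem zero_mem_subsetSums (a : ι → M) : 0 ∈ subsetSums a :=
  mem_subsetSums.2 ⟨∅, sum_empty⟩

theorem card_subsetSums_le (a : ι → M) : #(subsetSums a) ≤ 2 ^ Fintype.card ι :=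
  card_image_le.trans (by simp)

end SubsetSums

theorem range_two_pow_subset_subsetSums (n : ℕ) :
    range (2 ^ n) ⊆ subsetSums fun i : Fin n => 2 ^ (i : ℕ) := by
  intro s hs
  have hlt : ∀ j ∈ s.bitIndices.toFinset, j < n := fun j hj =>
    (Nat.pow_lt_pow_iff_right one_lt_two).1 <|
      (Nat.two_pow_le_of_mem_bitIndices (List.mem_toFinset.1 hj)).trans_lt (mem_range.1 hs)
  refine mem_subsetSums.2 ⟨s.bitIndices.toFinset.preimage Fin.val Fin.val_injective.injOn, ?_⟩
  rw [sum_preimage Fin.val _ _ (2 ^ ·), sum_toFinset_bitIndices_two_pow]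
  exact fun j hj hjn => absurd ⟨⟨j, hlt j hj⟩, rfl⟩ hjn

theorem CM_le_of_subset_subsetSums {S : Finset ℕ} {n : ℕ} (a : Fin n → ℕ) (ha : ∀ i, 0 < a i)
    (hS : S ⊆ subsetSums a) : CM S ≤ n :=
  Nat.sInf_le ⟨a, ha, fun _ hs => mem_subsetSums.1 (hS hs)⟩

theorem exists_subset_subsetSums_CM {S : Finset ℕ} (hS : ∀ s ∈ S, 0 < s) :
    ∃ a : Fin (CM S) → ℕ, (∀ i, 0 < a i) ∧ S ⊆ subsetSums a := by
  have hne : {n : ℕ | ∃ a : Fin n → ℕ, (∀ i, 0 < a i) ∧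
      ∀ s ∈ S, ∃ I : Finset (Fin n), ∑ i ∈ I, a i = s}.Nonempty :=
    ⟨#S, fun i => S.equivFin.symm i, fun i => hS _ (S.equivFin.symm i).2,
      fun s hs => ⟨{S.equivFin ⟨s, hs⟩}, by simp⟩⟩
  obtain ⟨a, ha, hsum⟩ := Nat.sInf_mem hne
  exact ⟨a, ha, fun s hs => mem_subsetSums.2 (hsum s hs)⟩

theorem card_lt_two_pow_CM {S : Finset ℕ} (hS : ∀ s ∈ S, 0 < s) : #S < 2 ^ CM S := by
  obtain ⟨a, -, hsub⟩ := exists_subset_subsetSums_CM hS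
  have h0 : 0 ∉ S := fun h => (hS 0 h).false
  calc #S < #(insert 0 S) := by rw [card_insert_of_notMem h0]; exact Nat.lt_succ_self _
    _ ≤ #(subsetSums a) := card_le_card (insert_subset (zero_mem_subsetSums a) hsub)
    _ ≤ 2 ^ CM S := by simpa using card_subsetSums_le a

/-- The set `{1, 2, …, k}` attains the lower bound `⌊log₂ k⌋ + 1`. -/
theorem cm_of_initial_segment (k : ℕ) (hk : 0 < k) :
    CM (Finset.Icc 1 k) = Nat.log 2 k + 1 := by
  apply le_antisymm
  · refine CM_le_of_subset_subsetSums (fun i => 2 ^ (i : ℕ)) (fun i => by positivity)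
      fun s hs => range_two_pow_subset_subsetSums _ ?_
    exact mem_range.2 ((mem_Icc.1 hs).2.trans_lt (Nat.lt_pow_succ_log_self one_lt_two k))
  · have hcard := card_lt_two_pow_CM (S := Icc 1 k) fun s hs => (mem_Icc.1 hs).1
    rw [Nat.card_Icc, Nat.add_sub_cancel] at hcard
    exact Nat.log_lt_of_lt_pow hk.ne' hcard
end

section
/- Let a and d be positive integers, let k ≥ 2, and let S = {a, a + d, a + 2d, …, a + (k−1)d} be an arithmetic progression of k distinct positive integers. Then CM(S) ≤ 2 + ⌊log₂(k − 1)⌋. -/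
/-!
Take the moves `a, d, 2d, …, 2^(m-1) d` with `m = ⌊log₂ (k − 1)⌋ + 1`: the jar `a + i d` is emptied
by the move `a` together with the moves `2^j d` for the binary digits `j` of `i < 2^m`.
-/

theorem Nat.exists_finset_fin_sum_two_pow_eq {m i : ℕ} (hi : i < 2 ^ m) :
    ∃ J : Finset (Fin m), ∑ j ∈ J, 2 ^ (j : ℕ) = i := by
  have hlt : ∀ j ∈ i.bitIndices.toFinset, j < m := fun j hj =>
    (Nat.pow_lt_pow_iff_right (by norm_num)).1
      ((Nat.two_pow_le_of_mem_bitIndices (List.mem_toFinset.1 hj)).trans_lt hi)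
  refine ⟨i.bitIndices.toFinset.attachFin hlt, ?_⟩
  rw [← Finset.sum_image (g := Fin.val) (f := (2 ^ ·)) Fin.val_injective.injOn,
    Finset.image_val_attachFin, Finset.sum_toFinset_bitIndices_two_pow]

theorem CM_arithProgression_le_of_le_two_pow {a d k m : ℕ} (ha : 0 < a) (hd : 0 < d) (hk : k ≤ 2 ^ m) :
    CM ((Finset.range k).image (fun i => a + i * d)) ≤ m + 1 := by
  refine Nat.sInf_le ⟨Fin.cons a fun j : Fin m => 2 ^ (j : ℕ) * d,
    Fin.cases ha fun j => Nat.mul_pos (by positivity) hd, ?_⟩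
  simp only [Finset.forall_mem_image, Finset.mem_range]
  intro i hi
  obtain ⟨J, hJ⟩ := Nat.exists_finset_fin_sum_two_pow_eq (hi.trans_le hk)
  refine ⟨Finset.cons 0 (J.map (Fin.succEmb m)) (by simp), ?_⟩
  simp [Finset.sum_map, ← Finset.sum_mul, hJ]

theorem cm_arith_progression_general (a d k : ℕ) (ha : 0 < a) (hd : 0 < d) :
    CM ((Finset.range k).image (fun i => a + i * d)) ≤ 2 + Nat.log 2 (k - 1) := by
  have hk : k ≤ 2 ^ (Nat.log 2 (k - 1) + 1) := by
    have := Nat.lt_pow_succ_log_self (by norm_num : 1 < 2) (k - 1)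
    omega
  calc _ ≤ Nat.log 2 (k - 1) + 1 + 1 := CM_arithProgression_le_of_le_two_pow ha hd hk
    _ = 2 + Nat.log 2 (k - 1) := by ring

/-- For an arithmetic progression `{a, a + d, …, a + (k−1)d}` of `k ≥ 2` distinct
positive integers, `CM(S) ≤ 2 + ⌊log₂ (k − 1)⌋`. -/
theorem cm_arith_progression (a d k : ℕ) (ha : 0 < a) (hd : 0 < d) (hk : 2 ≤ k) :
    CM ((Finset.range k).image (fun i => a + i * d)) ≤ 2 + Nat.log 2 (k - 1) :=
  cm_arith_progression_general a d k ha hd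
end

section
/- For every positive integer k, the set S = {F_2, F_3, …, F_{k+1}} of k consecutive Fibonacci numbers satisfies CM(S) = ⌊k/2⌋ + 1. -/
lemma fib_aux (p : ℕ) : ∀ t : ℕ,
    ∑ x ∈ Finset.range (t+1), (if x = 0 then Nat.fib (p+1) else Nat.fib (2*x+p))
      = Nat.fib (2*t+1+p) := by
  intro t
  induction t with
  | zero =>
      rw [Finset.sum_range_one, if_pos rfl]
      congr 1
      omega
  | succ t ih =>
      rw [Finset.sum_range_succ, ih, if_neg (by omega)]
      have h1 : 2*(t+1)+p = (2*t+1+p)+1 := by omega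
      have h2 : 2*(t+1)+1+p = (2*t+1+p)+2 := by omega
      rw [h1, h2, Nat.fib_add_two]

lemma sum_fib_le : ∀ (n m : ℕ),
    ∑ t ∈ Finset.range n, Nat.fib (m - 2*t - 2) ≤ Nat.fib (m - 1) := by
  intro n
  induction n with
  | zero => simp
  | succ n ih =>
      intro m
      rw [Finset.sum_range_succ']
      by_cases hm : 3 ≤ m
      · have h1 : ∀ t ∈ Finset.range n,
            Nat.fib (m - 2*(t+1) - 2) = Nat.fib ((m-2) - 2*t - 2) := by
          intro t _; congr 1; omega
        rw [Finset.sum_congr rfl h1]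
        have h2 := ih (m-2)
        have h3 : Nat.fib (m-1) = Nat.fib (m-3) + Nat.fib (m-2) := by
          have : m - 1 = (m-3) + 2 := by omega
          rw [this, Nat.fib_add_two]
          congr 2
          omega
        have h4 : (m - 2) - 1 = m - 3 := by omega
        rw [h4] at h2
        have h5 : m - 2*0 - 2 = m - 2 := by omega
        rw [h5, h3]
        omega
      · have h1 : ∀ t ∈ Finset.range n, Nat.fib (m - 2*(t+1) - 2) = 0 := by
          intro t _
          have : m - 2*(t+1) - 2 = 0 := by omega
          rw [this, Nat.fib_zero]
        rw [Finset.sum_congr rfl h1, Finset.sum_const, smul_zero]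
        rcases Nat.lt_or_ge m 3 with h | h
        · interval_cases m <;> simp
        · omega

lemma sum_le_counts {N : ℕ} (a : Fin N → ℕ) :
    ∀ (n : ℕ) (A : Finset (Fin N)) (c : ℕ → ℕ), A.card = n →
      (∀ t, (A.filter fun i => c t < a i).card ≤ t) →
      ∑ i ∈ A, a i ≤ ∑ t ∈ Finset.range n, c t := by
  intro n
  induction n with
  | zero =>
      intro A c hA _
      rw [Finset.card_eq_zero.mp hA]
      simp
  | succ n ih =>
      intro A c hA hcount
      have hne : A.Nonempty := Finset.card_pos.mp (by omega)
      obtain ⟨i0, hi0A, hmax⟩ := A.exists_max_image a hne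
      have h0 : a i0 ≤ c 0 := by
        by_contra h
        have hmem : i0 ∈ A.filter (fun i => c 0 < a i) :=
          Finset.mem_filter.mpr ⟨hi0A, by omega⟩
        have h1 := hcount 0
        have h2 : 0 < (A.filter fun i => c 0 < a i).card :=
          Finset.card_pos.mpr ⟨i0, hmem⟩
        omega
      have hA' : (A.erase i0).card = n := by
        rw [Finset.card_erase_of_mem hi0A, hA]
        omega
      have hcount' : ∀ t, ((A.erase i0).filter fun i => c (t+1) < a i).card ≤ t := by
        intro t
        by_cases hc : c (t+1) < a i0
        · have heq : (A.erase i0).filter (fun i => c (t+1) < a i)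
              = (A.filter fun i => c (t+1) < a i).erase i0 := by
            ext x
            simp only [Finset.mem_filter, Finset.mem_erase]
            tauto
          rw [heq, Finset.card_erase_of_mem
            (Finset.mem_filter.mpr ⟨hi0A, hc⟩)]
          have := hcount (t+1)
          omega
        · have heq : (A.erase i0).filter (fun i => c (t+1) < a i) = ∅ := by
            rw [Finset.filter_eq_empty_iff]
            intro x hx
            have hxA : x ∈ A := Finset.mem_of_mem_erase hx
            have := hmax x hxA
            omega
          rw [heq]
          simp
      have hsum : ∑ i ∈ A.erase i0, a i ≤ ∑ t ∈ Finset.range n, c (t+1) :=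
        ih (A.erase i0) (fun t => c (t+1)) hA' hcount'
      have htot : ∑ i ∈ A, a i = a i0 + ∑ i ∈ A.erase i0, a i :=
        (Finset.add_sum_erase A a hi0A).symm
      rw [htot, Finset.sum_range_succ']
      omega

lemma cm_lower : ∀ (k : ℕ), 1 ≤ k → ∀ {N : ℕ} (a : Fin N → ℕ) (A : Finset (Fin N)),
    (∀ j, 2 ≤ j → j ≤ k + 1 → ∃ I ⊆ A, ∑ i ∈ I, a i = Nat.fib j) →
    k / 2 + 1 ≤ A.card := by
  intro k
  induction k using Nat.strong_induction_on with
  | _ k IH =>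
    intro hk N a A hcov
    rcases Nat.lt_or_ge k 2 with hk2 | hk2
    · -- k = 1
      have hk1 : k = 1 := by omega
      subst hk1
      obtain ⟨I, hIA, hI⟩ := hcov 2 le_rfl (by omega)
      have hne : I.Nonempty := by
        rcases Finset.eq_empty_or_nonempty I with h | h
        · rw [h] at hI; simp [Nat.fib] at hI
        · exact h
      obtain ⟨i, hi⟩ := hne
      have : 0 < A.card := Finset.card_pos.mpr ⟨i, hIA hi⟩
      omega
    · by_contra hcon
      push_neg at hcon
      have hcard : A.card ≤ k / 2 := by omega
      have hcount : ∀ t, (A.filter fun i => Nat.fib (k - 1 - 2*t) < a i).card ≤ t := by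
        intro t
        rcases Nat.lt_or_ge (k - 1 - 2*t) 1 with hr | hr
        · have h1 : (A.filter fun i => Nat.fib (k - 1 - 2*t) < a i).card ≤ A.card :=
            Finset.card_filter_le _ _
          omega
        · -- r ≥ 1
          have hr' : 1 ≤ k - 1 - 2*t := hr
          set r : ℕ := max (k - 1 - 2*t) 2 with hrdef
          have hfib_eq : Nat.fib (k - 1 - 2*t) = Nat.fib r := by
            rcases Nat.lt_or_ge (k - 1 - 2*t) 2 with h | h
            · have h1 : k - 1 - 2*t = 1 := by omega
              have h2 : r = 2 := by omega
              rw [h1, h2]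
              rfl
            · have h2 : r = k - 1 - 2*t := by omega
              rw [h2]
          have hcov' : ∀ j, 2 ≤ j → j ≤ (r - 1) + 1 →
              ∃ I ⊆ A.filter (fun i => a i ≤ Nat.fib r), ∑ i ∈ I, a i = Nat.fib j := by
            intro j hj2 hjr
            have hjr' : j ≤ r := by omega
            obtain ⟨I, hIA, hIsum⟩ := hcov j hj2 (by omega)
            refine ⟨I, ?_, hIsum⟩
            intro i hiI
            refine Finset.mem_filter.mpr ⟨hIA hiI, ?_⟩
            have h1 : a i ≤ ∑ i ∈ I, a i :=
              Finset.single_le_sum (fun _ _ => Nat.zero_le _) hiI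
            rw [hIsum] at h1
            exact h1.trans (Nat.fib_mono hjr')
          have hIH := IH (r-1) (by omega) (by omega) a
            (A.filter (fun i => a i ≤ Nat.fib r)) hcov'
          have hsplit : (A.filter fun i => Nat.fib r < a i).card
              + (A.filter fun i => ¬ Nat.fib r < a i).card = A.card :=
            Finset.card_filter_add_card_filter_not _
          have heq2 : (A.filter fun i => ¬ Nat.fib r < a i)
              = A.filter (fun i => a i ≤ Nat.fib r) := by
            apply Finset.filter_congr
            intro i _
            simp [Nat.not_lt]
          rw [heq2] at hsplit
          rw [hfib_eq]
          have hrr : r = k - 1 - 2*t ∨ r = 2 := by omega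
          omega
      have hsum_upper : ∑ i ∈ A, a i ≤ ∑ t ∈ Finset.range A.card, Nat.fib (k - 1 - 2*t) :=
        sum_le_counts a A.card A (fun t => Nat.fib (k - 1 - 2*t)) rfl hcount
      have hC := sum_fib_le A.card (k+1)
      have harg : ∀ t ∈ Finset.range A.card,
          Nat.fib ((k+1) - 2*t - 2) = Nat.fib (k - 1 - 2*t) := by
        intro t _; congr 1; omega
      rw [Finset.sum_congr rfl harg] at hC
      have hk1 : (k+1) - 1 = k := by omega
      rw [hk1] at hC
      obtain ⟨I, hIA, hIsum⟩ := hcov (k+1) (by omega) le_rfl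
      have hle : Nat.fib (k+1) ≤ ∑ i ∈ A, a i := by
        rw [← hIsum]
        exact Finset.sum_le_sum_of_subset hIA
      have hlt : Nat.fib k < Nat.fib (k+1) := Nat.fib_lt_fib_succ hk2
      omega

theorem cm_fibonacci' (k : ℕ) (hk : 0 < k) :
    sInf {n : ℕ | ∃ a : Fin n → ℕ, (∀ i, 0 < a i) ∧
      ∀ s ∈ (Finset.Icc 2 (k + 1)).image Nat.fib,
        ∃ I : Finset (Fin n), ∑ i ∈ I, a i = s} = k / 2 + 1 := by
  set m := k / 2 with hm
  set p := k % 2 with hpdef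
  have hkmp : k = 2*m + p := by omega
  have hp : p = 0 ∨ p = 1 := by omega
  have hfib1 : Nat.fib (p+1) = 1 := by
    rcases hp with h | h <;> rw [h] <;> rfl
  have hmem : (m+1) ∈ {n : ℕ | ∃ a : Fin n → ℕ, (∀ i, 0 < a i) ∧
      ∀ s ∈ (Finset.Icc 2 (k + 1)).image Nat.fib,
        ∃ I : Finset (Fin n), ∑ i ∈ I, a i = s} := by
    refine ⟨fun i => if (i:ℕ) = 0 then 1 else Nat.fib (2*(i:ℕ) + p), ?_, ?_⟩
    · intro i
      dsimp only
      by_cases h : (i:ℕ) = 0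
      · rw [if_pos h]; omega
      · rw [if_neg h]
        exact Nat.fib_pos.mpr (by omega)
    · intro s hs
      obtain ⟨j, hj, rfl⟩ := Finset.mem_image.mp hs
      rw [Finset.mem_Icc] at hj
      by_cases hpar : j % 2 = p
      · obtain ⟨t, ht1, htm, hjt⟩ : ∃ t, 1 ≤ t ∧ t ≤ m ∧ j = 2*t + p :=
          ⟨j/2, by omega⟩
        refine ⟨{⟨t, by omega⟩}, ?_⟩
        rw [Finset.sum_singleton]
        have hco : ((⟨t, by omega⟩ : Fin (m+1)) : ℕ) = t := rfl
        rw [hco] at *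
        rw [if_neg (by omega), hjt]
      · obtain ⟨t, htm, hjt⟩ : ∃ t, t ≤ m ∧ j = 2*t + 1 + p :=
          ⟨(j-1-p)/2, by omega⟩
        refine ⟨Finset.univ.filter (fun i => (i:ℕ) ≤ t), ?_⟩
        rw [Finset.sum_filter]
        rw [Fin.sum_univ_eq_sum_range
          (fun x => if x ≤ t then (if x = 0 then 1 else Nat.fib (2*x+p)) else 0) (m+1)]
        rw [← Finset.sum_subset (Finset.range_subset_range.mpr (by omega : t+1 ≤ m+1))
          (by
            intro x hx hnx
            rw [if_neg]
            rw [Finset.mem_range] at hx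
            rw [Finset.mem_range] at hnx
            omega)]
        have h1 : ∀ x ∈ Finset.range (t+1),
            (if x ≤ t then (if x = 0 then 1 else Nat.fib (2*x+p)) else 0)
              = (if x = 0 then Nat.fib (p+1) else Nat.fib (2*x+p)) := by
          intro x hx
          rw [Finset.mem_range] at hx
          rw [if_pos (by omega), hfib1]
        rw [Finset.sum_congr rfl h1, fib_aux p t, hjt]
  apply le_antisymm
  · exact Nat.sInf_le hmem
  · apply le_csInf ⟨m+1, hmem⟩
    rintro n ⟨a, hpos, hcov⟩
    have h := cm_lower k hk a Finset.univ (by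
      intro j h2 hk1
      obtain ⟨I, hI⟩ := hcov (Nat.fib j)
        (Finset.mem_image.mpr ⟨j, Finset.mem_Icc.mpr ⟨h2, hk1⟩, rfl⟩)
      exact ⟨I, Finset.subset_univ I, hI⟩)
    simpa using h

/-- For the set `{F_2, F_3, …, F_{k+1}}` of `k` consecutive Fibonacci numbers,
`CM(S) = ⌊k/2⌋ + 1`. -/
theorem cm_fibonacci (k : ℕ) (hk : 0 < k) :
    CM ((Finset.Icc 2 (k + 1)).image Nat.fib) = k / 2 + 1 := by
  unfold CM
  exact cm_fibonacci' k hk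
end

section
/- For every positive integer k, the Tribonacci sequence satisfies T_{k+4} − T_{k+3} > ∑_{i=1}^{k-1} T_{i+2}; that is, the difference of two consecutive Tribonacci jar values exceeds the total of all jar values at least two positions below the smaller one. -/
/-- The Tribonacci sequence: `T 0 = 0`, `T 1 = 0`, `T 2 = 1`, and each subsequent
term is the sum of the previous three. -/
def trib : ℕ → ℕ
  | 0 => 0
  | 1 => 0
  | 2 => 1
  | n + 3 => trib n + trib (n + 1) + trib (n + 2)

lemma trib_sum_aux (k : ℕ) (hk : 0 < k) :
    ∑ i ∈ Finset.Icc 1 (k - 1), trib (i + 2) < trib (k + 1) + trib (k + 2) := by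
  induction k with
  | zero => omega
  | succ n ih =>
    rcases Nat.eq_zero_or_pos n with hn | hn
    · subst hn
      simp [trib]
    · have hrw : Finset.Icc 1 (n + 1 - 1) = Finset.Icc 1 ((n - 1) + 1) := by
        congr 1; omega
      rw [hrw, Finset.sum_Icc_succ_top (by omega : 1 ≤ (n - 1) + 1)]
      have h1 : n - 1 + 1 = n := by omega
      rw [h1]
      have ih' := ih hn
      have h2 : trib (n + 3) = trib n + trib (n + 1) + trib (n + 2) := rfl
      have h3 : n + 1 + 2 = n + 3 := by omega
      rw [h3, h2]
      have h4 : trib (n + 1 + 1) = trib (n + 2) := rfl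
      omega

/-- The difference of two consecutive Tribonacci jar values exceeds the total of
all jar values at least two positions below the smaller one:
`T_{k+4} − T_{k+3} > ∑_{i=1}^{k-1} T_{i+2}`. -/
theorem trib_diff_gt_sum_below (k : ℕ) (hk : 0 < k) :
    ∑ i ∈ Finset.Icc 1 (k - 1), trib (i + 2) < trib (k + 4) - trib (k + 3) := by
  have h : trib (k + 4) = trib (k + 1) + trib (k + 2) + trib (k + 3) := rfl
  have := trib_sum_aux k hk
  omega
end

section
/- For every positive integer k, the set S = {T_3, T_4, …, T_{k+2}} of k consecutive Tribonacci numbers satisfies CM(S) = ⌊2k/3⌋ + 1. -/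
lemma trib_add_three (n : ℕ) : trib (n+3) = trib n + trib (n+1) + trib (n+2) := rfl

lemma trib_mono : Monotone trib := by
  apply monotone_nat_of_le_succ
  intro n
  match n with
  | 0 => simp [trib]
  | 1 => simp [trib]
  | 2 => simp [trib]
  | m + 3 => show trib (m+3) ≤ trib (m+1) + trib (m+2) + trib (m+3); omega

lemma trib_one_le {n : ℕ} (h : 2 ≤ n) : 1 ≤ trib n := by
  have := trib_mono h
  simpa [trib] using this

lemma trib_lt_trib {i j : ℕ} (h3 : 3 ≤ i) (hij : i < j) : trib i < trib j := by
  have key : ∀ m, 3 ≤ m → trib m < trib (m+1) := by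
    intro m hm
    obtain ⟨p, rfl⟩ : ∃ p, m = p + 3 := ⟨m - 3, by omega⟩
    show trib (p+3) < trib (p+1) + trib (p+2) + trib (p+3)
    have h1 : 1 ≤ trib (p+2) := trib_one_le (by omega)
    omega
  calc trib i < trib (i+1) := key i h3
    _ ≤ trib j := trib_mono (by omega)

/-- Indices of the moves used in the construction. -/
def goodIdx (i : ℕ) : Prop := i = 3 ∨ ¬ (3 ∣ i)

instance : DecidablePred goodIdx := fun i => by unfold goodIdx; infer_instance

lemma sum_block : ∀ d : ℕ,
    ∑ i ∈ (Finset.Icc 3 (3*d+5)).filter goodIdx, trib i = trib (3*d+6) := by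
  intro d
  induction d with
  | zero =>
    decide
  | succ d ih =>
    have hIcc : Finset.Icc 3 (3*(d+1)+5) =
        insert (3*d+8) (insert (3*d+7) (insert (3*d+6) (Finset.Icc 3 (3*d+5)))) := by
      ext x
      simp only [Finset.mem_Icc, Finset.mem_insert]
      omega
    rw [hIcc, Finset.filter_insert, Finset.filter_insert, Finset.filter_insert]
    rw [if_pos (by unfold goodIdx; right; omega),
        if_pos (by unfold goodIdx; right; omega),
        if_neg (by unfold goodIdx; push_neg; constructor <;> omega)]
    rw [Finset.sum_insert (by
      intro h
      rcases Finset.mem_insert.mp h with h' | h'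
      · omega
      · have := (Finset.mem_filter.mp h').1
        rw [Finset.mem_Icc] at this
        omega)]
    rw [Finset.sum_insert (by
      intro h
      have := (Finset.mem_filter.mp h).1
      rw [Finset.mem_Icc] at this
      omega)]
    rw [ih]
    have e : trib (3*d+9) = trib (3*d+6) + trib (3*d+7) + trib (3*d+8) := by
      have h := trib_add_three (3*d+6)
      rw [show 3*d+6+3 = 3*d+9 from by ring, show 3*d+6+1 = 3*d+7 from by ring,
          show 3*d+6+2 = 3*d+8 from by ring] at h
      exact h
    rw [show 3*(d+1)+6 = 3*d+9 from by ring]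
    omega

lemma cardB : ∀ k : ℕ, 1 ≤ k →
    ((Finset.Icc 3 (k+2)).filter goodIdx).card = 2*k/3 + 1 := by
  intro k hk
  induction k with
  | zero => omega
  | succ k ih =>
    by_cases hk1 : 1 ≤ k
    · have hIcc : Finset.Icc 3 (k+1+2) = insert (k+3) (Finset.Icc 3 (k+2)) := by
        ext x
        simp only [Finset.mem_Icc, Finset.mem_insert]
        omega
      rw [hIcc, Finset.filter_insert]
      have ih' := ih hk1
      by_cases hg : goodIdx (k+3)
      · rw [if_pos hg]
        rw [Finset.card_insert_of_notMem (by
          intro h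
          have := (Finset.mem_filter.mp h).1
          rw [Finset.mem_Icc] at this
          omega)]
        rw [ih']
        unfold goodIdx at hg
        obtain ⟨q, r, hr, rfl⟩ : ∃ q r, r < 3 ∧ k = 3*q + r :=
          ⟨k/3, k%3, by omega, by omega⟩
        rcases hg with h3 | hnd
        · omega
        · interval_cases r <;> omega
      · rw [if_neg hg, ih']
        unfold goodIdx at hg
        push_neg at hg
        obtain ⟨-, hdvd⟩ := hg
        obtain ⟨q, r, hr, rfl⟩ : ∃ q r, r < 3 ∧ k = 3*q + r :=
          ⟨k/3, k%3, by omega, by omega⟩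
        interval_cases r <;> omega
    · have : k = 0 := by omega
      subst this
      decide

lemma trib_succ_3 (n : ℕ) : trib (n+4) = trib (n+1) + trib (n+2) + trib (n+3) := rfl

/-- `s` can be written as a sum of moves with indices inside `D`. -/
def RepsIn {n : ℕ} (a : Fin n → ℕ) (D : Finset (Fin n)) (s : ℕ) : Prop :=
  ∃ I ⊆ D, ∑ i ∈ I, a i = s

lemma exists_move_one {n : ℕ} {a : Fin n → ℕ} {D : Finset (Fin n)}
    (pos : ∀ i, 0 < a i) (h : RepsIn a D 1) : ∃ i ∈ D, a i = 1 := by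
  obtain ⟨I, hID, hsum⟩ := h
  have hne : I.Nonempty := by
    rcases I.eq_empty_or_nonempty with rfl | h
    · simp at hsum
    · exact h
  obtain ⟨i, hi⟩ := hne
  have h1 : a i ≤ 1 := hsum ▸ Finset.single_le_sum (fun j _ => Nat.zero_le _) hi
  exact ⟨i, hID hi, le_antisymm h1 (pos i)⟩

lemma rep_subset_small {n : ℕ} {a : Fin n → ℕ} {D I : Finset (Fin n)} {s c : ℕ}
    (hI : I ⊆ D) (hsum : ∑ i ∈ I, a i = s) (hsc : s ≤ c) :
    I ⊆ D.filter (fun i => a i ≤ c) := by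
  intro i hi
  rw [Finset.mem_filter]
  exact ⟨hI hi, le_trans (hsum ▸ Finset.single_le_sum (fun j _ => Nat.zero_le _) hi) hsc⟩

theorem master : ∀ K, 1 ≤ K →
    (∀ (n : ℕ) (a : Fin n → ℕ) (D : Finset (Fin n)), (∀ i, 0 < a i) →
      (∀ j, 3 ≤ j → j ≤ K + 2 → RepsIn a D (trib j)) → 2*K/3 + 1 ≤ D.card) ∧
    (∀ jj, 1 ≤ jj → ∀ (n : ℕ) (a : Fin n → ℕ) (D : Finset (Fin n)), (∀ i, 0 < a i) →
      (∀ i ∈ D, a i ≤ trib (K + 2)) →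
      (jj + 1) * trib (K + 2) + trib (K + 1) + trib K ≤ ∑ i ∈ D, a i →
      (∀ j, 3 ≤ j → j ≤ K + 2 → RepsIn a D (trib j)) → 2*K/3 + 1 + jj ≤ D.card) := by
  intro K
  induction K using Nat.strong_induction_on with
  | _ K IH =>
  intro hK
  by_cases hK3 : K ≤ 3
  · -- base cases K = 1, 2, 3
    interval_cases K
    · constructor
      ·
          intro n a D pos hreps
          obtain ⟨i, hiD, -⟩ := exists_move_one pos (hreps 3 le_rfl (by omega))
          have : 0 < D.card := Finset.card_pos.mpr ⟨i, hiD⟩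
          omega
      ·
          intro jj hjj n a D pos cap hS hreps
          have hsum : ∑ i ∈ D, a i = D.card := by
            rw [Finset.sum_congr rfl (fun i hi => le_antisymm (cap i hi) (pos i))]
            simp [show trib 3 = 1 from rfl]
          have e3 : trib (1+2) = 1 := rfl
          have e2 : trib (1+1) = 1 := rfl
          have e1 : trib 1 = 0 := rfl
          rw [e3, e2, e1] at hS
          omega
    · constructor
      ·
          intro n a D pos hreps
          obtain ⟨i0, hi0D, hi0a⟩ := exists_move_one pos (hreps 3 le_rfl (by omega))
          obtain ⟨I2, hI2D, hsum2⟩ := hreps 4 (by omega) le_rfl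
          have h2 : (trib 4 : ℕ) = 2 := rfl
          have : ∃ i1 ∈ I2, i1 ≠ i0 := by
            by_contra hcon
            push_neg at hcon
            have hsub : I2 ⊆ {i0} := fun i hi => Finset.mem_singleton.mpr (hcon i hi)
            have := Finset.sum_le_sum_of_subset (f := a) hsub
            simp [hi0a] at this
            omega
          obtain ⟨i1, hi1I, hne⟩ := this
          have hsub : ({i0, i1} : Finset (Fin n)) ⊆ D := by
            intro i hi
            rcases Finset.mem_insert.mp hi with rfl | hi
            · exact hi0D
            · exact hI2D (Finset.mem_singleton.mp hi ▸ hi1I)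
          have hcard2 : ({i0, i1} : Finset (Fin n)).card = 2 := Finset.card_pair (Ne.symm hne)
          have := Finset.card_le_card hsub
          omega
      ·
          intro jj hjj n a D pos cap hS hreps
          have hb : ∑ i ∈ D, a i ≤ D.card * 2 := by
            have := Finset.sum_le_card_nsmul D a 2 (fun i hi => cap i hi)
            simpa [smul_eq_mul] using this
          have e4 : trib (2+2) = 2 := rfl
          have e3 : trib (2+1) = 1 := rfl
          have e2 : trib 2 = 1 := rfl
          rw [e4, e3, e2] at hS
          omega
    · constructor
      ·
          intro n a D pos hreps
          by_contra hcon
          push_neg at hcon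
          have hcard : D.card ≤ 2 := by omega
          obtain ⟨i0, hi0D, hi0a⟩ := exists_move_one pos (hreps 3 le_rfl (by omega))
          obtain ⟨I4, hI4D, hsum4⟩ := hreps 5 (by omega) le_rfl
          have e5 : (trib 5 : ℕ) = 4 := rfl
          rw [e5] at hsum4
          -- some element of I4 has a ≥ 2
          have : ∃ i1 ∈ I4, 2 ≤ a i1 := by
            by_contra hcon2
            push_neg at hcon2
            have h1 : ∑ i ∈ I4, a i ≤ I4.card * 1 := by
              have := Finset.sum_le_card_nsmul I4 a 1 (fun i hi => by have := hcon2 i hi; omega)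
              simpa [smul_eq_mul] using this
            have h2 : I4.card ≤ D.card := Finset.card_le_card hI4D
            omega
          obtain ⟨i1, hi1I, hi1a⟩ := this
          have hi1D : i1 ∈ D := hI4D hi1I
          have hne : i1 ≠ i0 := by intro h; rw [h, hi0a] at hi1a; omega
          have hsubD : ({i0, i1} : Finset (Fin n)) ⊆ D := by
            intro i hi
            rcases Finset.mem_insert.mp hi with rfl | hi
            · exact hi0D
            · exact Finset.mem_singleton.mp hi ▸ hi1D
          have hDeq : ({i0, i1} : Finset (Fin n)) = D :=
            Finset.eq_of_subset_of_card_le hsubD (by rw [Finset.card_pair (Ne.symm hne)]; omega)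
          have herase_sub : I4.erase i1 ⊆ {i0} := by
            intro i hi
            have hiD : i ∈ D := hI4D (Finset.mem_of_mem_erase hi)
            have : i ∈ ({i0, i1} : Finset (Fin n)) := hDeq ▸ hiD
            rcases Finset.mem_insert.mp this with rfl | h
            · exact Finset.mem_singleton_self _
            · exact absurd (Finset.mem_singleton.mp h) (Finset.ne_of_mem_erase hi)
          have h1 : ∑ i ∈ I4.erase i1, a i ≤ a i0 := by
            have := Finset.sum_le_sum_of_subset (f := a) herase_sub
            simpa using this
          have h2 : ∑ i ∈ I4.erase i1, a i + a i1 = 4 := by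
            rw [Finset.sum_erase_add _ _ hi1I]; exact hsum4
          have hi1a3 : 3 ≤ a i1 := by omega
          obtain ⟨I2, hI2D, hsum2⟩ := hreps 4 (by omega) (by omega)
          have e4 : (trib 4 : ℕ) = 2 := rfl
          rw [e4] at hsum2
          by_cases hi1I2 : i1 ∈ I2
          · have := hsum2 ▸ Finset.single_le_sum (f := a) (fun j _ => Nat.zero_le _) hi1I2
            omega
          · have hsubI2 : I2 ⊆ {i0} := by
              intro i hi
              have : i ∈ ({i0, i1} : Finset (Fin n)) := hDeq ▸ hI2D hi
              rcases Finset.mem_insert.mp this with rfl | h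
              · exact Finset.mem_singleton_self _
              · exact absurd (Finset.mem_singleton.mp h) (by rintro rfl; exact hi1I2 hi)
            have := Finset.sum_le_sum_of_subset (f := a) hsubI2
            simp [hi0a] at this
            omega
      ·
          intro jj hjj n a D pos cap hS hreps
          obtain ⟨i0, hi0D, hi0a⟩ := exists_move_one pos (hreps 3 le_rfl (by omega))
          have hsplit : ∑ i ∈ D.erase i0, a i + a i0 = ∑ i ∈ D, a i := Finset.sum_erase_add _ _ hi0D
          have hb : ∑ i ∈ D.erase i0, a i ≤ (D.erase i0).card * 4 := by
            have := Finset.sum_le_card_nsmul (D.erase i0) a 4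
              (fun i hi => cap i (Finset.mem_of_mem_erase hi))
            simpa [smul_eq_mul] using this
          have hce : (D.erase i0).card = D.card - 1 := Finset.card_erase_of_mem hi0D
          have hc1 : 1 ≤ D.card := Finset.card_pos.mpr ⟨i0, hi0D⟩
          have e5 : trib (3+2) = 4 := rfl
          have e4 : trib (3+1) = 2 := rfl
          have e3 : trib 3 = 1 := rfl
          rw [e5, e4, e3] at hS
          omega
  · -- step: K = L + 3
    obtain ⟨L, rfl⟩ : ∃ L, K = L + 3 := ⟨K - 3, by omega⟩
    have hL : 1 ≤ L := by omega
    obtain ⟨IHP, IHG⟩ := IH L (by omega) hL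
    -- abbreviations
    set Z := trib L with hZ
    set Y := trib (L+1) with hY
    set X := trib (L+2) with hX
    set W := trib (L+3) with hW
    set V := trib (L+4) with hV
    set U := trib (L+5) with hU
    have eW : W = Z + Y + X := trib_add_three L
    have eV : V = Y + X + W := trib_succ_3 L
    have eU : U = X + W + V := by
      have : trib (L+5) = trib (L+2) + trib (L+3) + trib (L+4) := trib_add_three (L+2)
      simpa using this
    have hXW : X ≤ W := trib_mono (by omega)
    have hZW : Z ≤ W := trib_mono (by omega)
    have hXU : X ≤ U := trib_mono (by omega)
    constructor
    · -- P (L+3)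
      intro n a D pos hreps
      set Dsm := D.filter (fun i => a i ≤ X) with hDsm
      set Dbig := D.filter (fun i => ¬ (a i ≤ X)) with hDbig
      have hcard : Dsm.card + Dbig.card = D.card := Finset.card_filter_add_card_filter_not _
      have hrepsSm : ∀ j, 3 ≤ j → j ≤ L + 2 → RepsIn a Dsm (trib j) := by
        intro j h3 hj
        obtain ⟨I, hID, hsum⟩ := hreps j h3 (by omega)
        exact ⟨I, rep_subset_small hID hsum (trib_mono hj), hsum⟩
      by_cases ht : 2 ≤ Dbig.card
      · have := IHP n a Dsm pos hrepsSm
        omega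
      · -- at most one big move
        have hSig : X + W ≤ ∑ i ∈ Dsm, a i := by
          have hble : Dbig.card ≤ 1 := by omega
          have huniq : ∀ i ∈ Dbig, ∀ j ∈ Dbig, i = j := Finset.card_le_one.mp hble
          obtain ⟨J, hJD, hJsum⟩ := hreps (L+5) (by omega) (by omega)
          by_cases hJsm : ∀ i ∈ J, a i ≤ X
          · have hsub : J ⊆ Dsm := fun i hi => Finset.mem_filter.mpr ⟨hJD hi, hJsm i hi⟩
            have hle := Finset.sum_le_sum_of_subset (f := a) hsub
            omega
          · push_neg at hJsm
            obtain ⟨ib, hibJ, hibX⟩ := hJsm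
            have hibBig : ib ∈ Dbig := Finset.mem_filter.mpr ⟨hJD hibJ, by omega⟩
            obtain ⟨J', hJ'D, hJ'sum⟩ := hreps (L+4) (by omega) (by omega)
            by_cases hJ'sm : ∀ i ∈ J', a i ≤ X
            · have hsub : J' ⊆ Dsm := fun i hi => Finset.mem_filter.mpr ⟨hJ'D hi, hJ'sm i hi⟩
              have hle := Finset.sum_le_sum_of_subset (f := a) hsub
              omega
            · push_neg at hJ'sm
              obtain ⟨ib', hib'J, hib'X⟩ := hJ'sm
              have hib'Big : ib' ∈ Dbig := Finset.mem_filter.mpr ⟨hJ'D hib'J, by omega⟩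
              have heq : ib' = ib := huniq ib' hib'Big ib hibBig
              have hbV : a ib ≤ trib (L+4) :=
                hJ'sum ▸ Finset.single_le_sum (f := a) (fun j _ => Nat.zero_le _) (heq ▸ hib'J)
              have herase : J.erase ib ⊆ Dsm := by
                intro i hi
                have hiJ : i ∈ J := Finset.mem_of_mem_erase hi
                refine Finset.mem_filter.mpr ⟨hJD hiJ, ?_⟩
                by_contra hbig
                have : i ∈ Dbig := Finset.mem_filter.mpr ⟨hJD hiJ, hbig⟩
                exact Finset.ne_of_mem_erase hi (huniq i this ib hibBig)
              have hle := Finset.sum_le_sum_of_subset (f := a) herase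
              have hsplit : ∑ i ∈ J.erase ib, a i + a ib = ∑ i ∈ J, a i :=
                Finset.sum_erase_add _ _ hibJ
              omega
        have capSm : ∀ i ∈ Dsm, a i ≤ trib (L+2) := by
          intro i hi; rw [hDsm, Finset.mem_filter] at hi; exact hi.2
        by_cases ht0 : Dbig.card = 0
        · -- t = 0 : all moves small, use G(L,2) with Σ ≥ U
          have hDD : D = Dsm := by
            have hempty : Dbig = ∅ := Finset.card_eq_zero.mp ht0
            rw [hDsm]
            refine (Finset.filter_eq_self.mpr ?_).symm
            intro i hi
            by_contra hbig
            have : i ∈ Dbig := Finset.mem_filter.mpr ⟨hi, hbig⟩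
            rw [hempty] at this
            exact absurd this (Finset.notMem_empty i)
          have hU' : ∑ i ∈ Dsm, a i ≥ U := by
            obtain ⟨I, hID, hsum⟩ := hreps (L+5) (by omega) (by omega)
            calc U = ∑ i ∈ I, a i := hsum.symm
              _ ≤ ∑ i ∈ Dsm, a i := Finset.sum_le_sum_of_subset (hDD ▸ hID)
          have hθ : (2+1) * trib (L+2) + trib (L+1) + trib L ≤ ∑ i ∈ Dsm, a i := by
            rw [← hX, ← hY, ← hZ]; omega
          have := IHG 2 (by omega) n a Dsm pos capSm hθ hrepsSm
          omega
        · -- t = 1 : use G(L,1) with Σsm ≥ X + W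
          have hθ : (1+1) * trib (L+2) + trib (L+1) + trib L ≤ ∑ i ∈ Dsm, a i := by
            rw [← hX, ← hY, ← hZ]; omega
          have := IHG 1 le_rfl n a Dsm pos capSm hθ hrepsSm
          omega
    · -- G (L+3)
      intro jj hjj n a D pos cap hSD hreps
      set Dsm := D.filter (fun i => a i ≤ X) with hDsm
      set Dbig := D.filter (fun i => ¬ (a i ≤ X)) with hDbig
      have hcard : Dsm.card + Dbig.card = D.card := Finset.card_filter_add_card_filter_not _
      have hsumsplit : ∑ i ∈ Dsm, a i + ∑ i ∈ Dbig, a i = ∑ i ∈ D, a i :=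
        Finset.sum_filter_add_sum_filter_not _ _ _
      have hrepsSm : ∀ j, 3 ≤ j → j ≤ L + 2 → RepsIn a Dsm (trib j) := by
        intro j h3 hj
        obtain ⟨I, hID, hsum⟩ := hreps j h3 (by omega)
        exact ⟨I, rep_subset_small hID hsum (trib_mono hj), hsum⟩
      have capSm : ∀ i ∈ Dsm, a i ≤ trib (L+2) := by
        intro i hi; rw [hDsm, Finset.mem_filter] at hi; exact hi.2
      by_cases ht : jj + 2 ≤ Dbig.card
      · have := IHP n a Dsm pos hrepsSm
        omega
      · -- t ≤ jj + 1
        set t := Dbig.card with htdef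
        have hbig : ∑ i ∈ Dbig, a i ≤ t * U := by
          have := Finset.sum_le_card_nsmul Dbig a U (by
            intro i hi
            rw [hDbig, Finset.mem_filter] at hi
            exact cap i hi.1)
          simpa [smul_eq_mul] using this
        set r := jj + 1 - t with hrdef
        have hrt : jj + 1 = r + t := by omega
        have hsm : r * U + V + W ≤ ∑ i ∈ Dsm, a i := by
          have h1 : (jj+1) * U = r * U + t * U := by rw [hrt, add_mul]
          -- from hSD : (jj+1)*U + V + W ≤ ΣD = Σsm + Σbig ≤ Σsm + t*U
          have h2 : (jj + 1) * U + V + W ≤ ∑ i ∈ D, a i := hSD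
          omega
        have hsm2 : (r + 2) * X + Y + Z ≤ ∑ i ∈ Dsm, a i := by
          have hrUX : r * X ≤ r * U := Nat.mul_le_mul_left r hXU
          have : (r+2) * X = r * X + 2 * X := by ring
          omega
        have hθ : ((r+1) + 1) * trib (L+2) + trib (L+1) + trib L ≤ ∑ i ∈ Dsm, a i := by
          rw [← hX, ← hY, ← hZ]
          have : (r+1+1) * X = (r+2)*X := by ring
          omega
        have := IHG (r+1) (by omega) n a Dsm pos capSm hθ hrepsSm
        omega

lemma trib_injOn {F : Finset ℕ} (hF : ∀ x ∈ F, 3 ≤ x) :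
    ∀ x ∈ F, ∀ y ∈ F, trib x = trib y → x = y := by
  intro x hx y hy hxy
  rcases lt_trichotomy x y with h | h | h
  · exact absurd hxy (Nat.ne_of_lt (trib_lt_trib (hF x hx) h))
  · exact h
  · exact absurd hxy.symm (Nat.ne_of_lt (trib_lt_trib (hF y hy) h))

lemma cm_mem (S M : Finset ℕ) (hpos : ∀ x ∈ M, 0 < x)
    (hrep : ∀ s ∈ S, ∃ C ⊆ M, ∑ c ∈ C, c = s) :
    M.card ∈ {n : ℕ | ∃ a : Fin n → ℕ, (∀ i, 0 < a i) ∧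
      ∀ s ∈ S, ∃ I : Finset (Fin n), ∑ i ∈ I, a i = s} := by
  set e := M.orderIsoOfFin rfl with he
  refine ⟨fun i => (e i : ℕ), fun i => hpos _ (e i).2, ?_⟩
  intro s hs
  obtain ⟨C, hCM, hCsum⟩ := hrep s hs
  refine ⟨Finset.univ.filter (fun i => ((e i : ℕ) ∈ C)), ?_⟩
  rw [← hCsum]
  apply Finset.sum_bij (fun i _ => (e i : ℕ))
  · intro i hi; exact (Finset.mem_filter.mp hi).2
  · intro i hi j hj h
    exact e.injective (Subtype.ext h)
  · intro c hc
    refine ⟨e.symm ⟨c, hCM hc⟩, Finset.mem_filter.mpr ⟨Finset.mem_univ _, ?_⟩, ?_⟩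
    · simp
      exact hc
    · simp
  · intro i hi; rfl

lemma reps_all (k j : ℕ) (h3 : 3 ≤ j) (hj : j ≤ k+2) :
    ∃ C ⊆ ((Finset.Icc 3 (k+2)).filter goodIdx).image trib, ∑ c ∈ C, c = trib j := by
  by_cases hg : goodIdx j
  · refine ⟨{trib j}, ?_, by simp⟩
    rw [Finset.singleton_subset_iff]
    exact Finset.mem_image_of_mem trib
      (Finset.mem_filter.mpr ⟨Finset.mem_Icc.mpr ⟨h3, hj⟩, hg⟩)
  · unfold goodIdx at hg
    push_neg at hg
    obtain ⟨hne3, m, hm⟩ := hg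
    obtain ⟨d, rfl⟩ : ∃ d, j = 3*d+6 := ⟨m - 2, by omega⟩
    refine ⟨((Finset.Icc 3 (3*d+5)).filter goodIdx).image trib, ?_, ?_⟩
    · apply Finset.image_subset_image
      apply Finset.filter_subset_filter
      exact Finset.Icc_subset_Icc_right (by omega)
    · rw [Finset.sum_image (trib_injOn (fun x hx =>
        (Finset.mem_Icc.mp (Finset.mem_of_mem_filter x hx)).1))]
      exact sum_block d

/-- For the set `{T_3, T_4, …, T_{k+2}}` of `k` consecutive Tribonacci numbers,
`CM(S) = ⌊2k/3⌋ + 1`. -/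
theorem cm_tribonacci (k : ℕ) (hk : 0 < k) :
    CM ((Finset.Icc 3 (k + 2)).image trib) = 2 * k / 3 + 1 := by
  have master1 : ∀ (n : ℕ) (a : Fin n → ℕ) (D : Finset (Fin n)), (∀ i, 0 < a i) →
      (∀ j, 3 ≤ j → j ≤ k + 2 → ∃ I ⊆ D, ∑ i ∈ I, a i = trib j) → 2*k/3 + 1 ≤ D.card :=
    fun n a D hpos hreps => (master k hk).1 n a D hpos hreps
  set S := (Finset.Icc 3 (k+2)).image trib with hS
  set B := (Finset.Icc 3 (k+2)).filter goodIdx with hB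
  set M := B.image trib with hMdef
  have hMcard : M.card = 2*k/3+1 := by
    rw [hMdef, Finset.card_image_of_injOn]
    · exact cardB k hk
    · intro x hx y hy hxy
      exact trib_injOn (fun z hz => (Finset.mem_Icc.mp (Finset.mem_of_mem_filter z hz)).1)
        x hx y hy hxy
  have hpos : ∀ x ∈ M, 0 < x := by
    intro x hx
    obtain ⟨i, hi, rfl⟩ := Finset.mem_image.mp hx
    have h3 : 3 ≤ i := (Finset.mem_Icc.mp (Finset.mem_of_mem_filter i hi)).1
    exact trib_one_le (by omega)
  have hrep : ∀ s ∈ S, ∃ C ⊆ M, ∑ c ∈ C, c = s := by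
    intro s hs
    obtain ⟨j, hj, rfl⟩ := Finset.mem_image.mp hs
    rw [Finset.mem_Icc] at hj
    exact reps_all k j hj.1 hj.2
  have hmem0 := cm_mem S M hpos hrep
  have hmem : (2*k/3+1) ∈ {n : ℕ | ∃ a : Fin n → ℕ, (∀ i, 0 < a i) ∧
      ∀ s ∈ S, ∃ I : Finset (Fin n), ∑ i ∈ I, a i = s} := hMcard ▸ hmem0
  have hlb : ∀ m ∈ {n : ℕ | ∃ a : Fin n → ℕ, (∀ i, 0 < a i) ∧
      ∀ s ∈ S, ∃ I : Finset (Fin n), ∑ i ∈ I, a i = s}, 2*k/3+1 ≤ m := by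
    rintro m ⟨a, apos, hrepm⟩
    have hreps : ∀ j, 3 ≤ j → j ≤ k + 2 → ∃ I ⊆ (Finset.univ : Finset (Fin m)),
        ∑ i ∈ I, a i = trib j := by
      intro j hj3 hjk
      obtain ⟨I, hI⟩ := hrepm (trib j)
        (Finset.mem_image_of_mem trib (Finset.mem_Icc.mpr ⟨hj3, hjk⟩))
      exact ⟨I, Finset.subset_univ I, hI⟩
    have := master1 m a Finset.univ apos hreps
    simpa using this
  exact le_antisymm (Nat.sInf_le hmem) (le_csInf ⟨_, hmem⟩ hlb)
end

section
/- Let n ≥ 2 and let M_i = N_{n+i-1} denote the i-th n-nacci jar value. Then for every positive integer k, M_{k+1} > ∑_{i=1}^{k-1} M_i; that is, N_{n+k} > ∑_{i=1}^{k-1} N_{n+i-1}. -/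
/-- The n-nacci sequence: `N i = 0` for `i < n - 1`, `N (n-1) = 1`, and each
subsequent term is the sum of the previous `n` terms. -/
def nnacci (n : ℕ) : ℕ → ℕ
  | i =>
    if i < n - 1 then 0
    else if _h : i = n - 1 then 1
    else ∑ j ∈ (Finset.range n).attach, nnacci n (i - n + j.1)
decreasing_by
  have hj := j.2
  simp only [Finset.mem_range] at hj
  omega

lemma nnacci_rec (n i : ℕ) (hn : 2 ≤ n) (h : n ≤ i) :
    nnacci n i = ∑ j ∈ Finset.range n, nnacci n (i - n + j) := by
  rw [nnacci, if_neg (by omega), dif_neg (by omega)]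
  exact Finset.sum_attach _ (fun j => nnacci n (i - n + j))

lemma nnacci_base (n : ℕ) (hn : 2 ≤ n) : nnacci n (n - 1) = 1 := by
  rw [nnacci, if_neg (by omega), dif_pos rfl]

lemma nnacci_pos (n : ℕ) (hn : 2 ≤ n) : ∀ i, n - 1 ≤ i → 0 < nnacci n i := by
  intro i
  induction i using Nat.strong_induction_on with
  | _ i ih =>
    intro hi
    rcases eq_or_lt_of_le hi with h | h
    · rw [← h, nnacci_base n hn]; norm_num
    · have hni : n ≤ i := by omega
      rw [nnacci_rec n i hn hni]
      have h1 : 0 < nnacci n (i - n + (n - 1)) := by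
        apply ih <;> omega
      exact lt_of_lt_of_le h1 (Finset.single_le_sum
        (f := fun j => nnacci n (i - n + j)) (fun _ _ => Nat.zero_le _)
        (Finset.mem_range.mpr (by omega)))

lemma nnacci_step (n i : ℕ) (hn : 2 ≤ n) (h : n ≤ i) :
    nnacci n (i - 2) + nnacci n (i - 1) ≤ nnacci n i := by
  rw [nnacci_rec n i hn h]
  have hsub : ({n - 2, n - 1} : Finset ℕ) ⊆ Finset.range n := by
    intro x hx
    simp only [Finset.mem_insert, Finset.mem_singleton] at hx
    rcases hx with rfl | rfl <;> simp [Finset.mem_range] <;> omega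
  calc nnacci n (i - 2) + nnacci n (i - 1)
      = ∑ j ∈ ({n - 2, n - 1} : Finset ℕ), nnacci n (i - n + j) := by
        rw [Finset.sum_pair (by omega : n - 2 ≠ n - 1)]
        congr 1 <;> congr 1 <;> omega
    _ ≤ _ := Finset.sum_le_sum_of_subset_of_nonneg hsub (fun _ _ _ => Nat.zero_le _)

/-- With jar values `M_i = N_{n+i-1}`, one has `M_{k+1} > ∑_{i=1}^{k-1} M_i`,
i.e. `N_{n+k} > ∑_{i=1}^{k-1} N_{n+i-1}`. -/
theorem nnacci_gt_sum_below (n : ℕ) (hn : 2 ≤ n) (k : ℕ) (hk : 0 < k) :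
    ∑ i ∈ Finset.Icc 1 (k - 1), nnacci n (n + i - 1) < nnacci n (n + k) := by
  induction k with
  | zero => omega
  | succ k ih =>
    rcases Nat.eq_zero_or_pos k with rfl | hk'
    · simp only [Nat.sub_self, Finset.Icc_eq_empty_of_lt (by norm_num : (0:ℕ) < 1)]
      simp only [Finset.sum_empty]
      exact nnacci_pos n hn (n + 1) (by omega)
    · have hIcc : Finset.Icc 1 (k + 1 - 1) = Finset.Icc 1 (k - 1 + 1) := by
        congr 1; omega
      rw [hIcc, Finset.sum_Icc_succ_top (by omega)]
      have hk1 : k - 1 + 1 = k := by omega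
      rw [hk1]
      have hstep := nnacci_step n (n + k + 1) hn (by omega)
      have e1 : n + k + 1 - 2 = n + k - 1 := by omega
      have e2 : n + k + 1 - 1 = n + k := by omega
      rw [e1, e2] at hstep
      have : ∑ i ∈ Finset.Icc 1 (k - 1), nnacci n (n + i - 1) + nnacci n (n + k - 1)
          < nnacci n (n + k) + nnacci n (n + k - 1) :=
        Nat.add_lt_add_right (ih hk') _
      have e3 : nnacci n (n + (k + 1)) = nnacci n (n + k + 1) := by
        congr 1
      omega
end

section
/- Let n ≥ 2 and let k be a positive integer. The set S = {N_n, N_{n+1}, …, N_{n+k-1}} of k consecutive n-nacci numbers satisfies CM(S) = ⌊(n−1)k/n⌋ + 1. -/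
/-!
Write `s j = N (j + n)`, so that `S = {s 0, …, s (k - 1)}`, `s j = 1 + s 0 + ⋯ + s (j - 1)` for
`j < n` and `s (j + n) = s j + ⋯ + s (j + n - 1)`; in particular each term exceeds the sum of the
`n - 1` terms before it.

Upper bound: use the moves `s j` for the `j < k` that are not positive multiples of `n`; unwinding
the recursion writes `s (q * n)` as the sum of all of these with `j < q * n`.

Lower bound: given moves and a representation `I j` of each `s j`, call `j` old if `I j` only
uses moves already used by `I 0, …, I (j - 1)`. New indices need distinct fresh moves, and an old
`s j` is at most the sum of the earlier new terms. If `c` old indices precede `j`, their terms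
sum to at least `s 0 + ⋯ + s (c * n - 1)`, and the strict inequality above then forces
`j ≥ (c + 1) * n`; so at most `(k - 1) / n` indices are old.
-/

open Finset

section Nnacci

variable {n : ℕ}

lemma nnacci_of_lt_sub_one {i : ℕ} (h : i < n - 1) : nnacci n i = 0 := by
  rw [nnacci, if_pos h]

lemma nnacci_sub_one : nnacci n (n - 1) = 1 := by
  rw [nnacci]; simp

lemma nnacci_eq_sum_Ico {i : ℕ} (h : n - 1 < i) :
    nnacci n i = ∑ j ∈ Ico (i - n) i, nnacci n j := by
  rw [nnacci, if_neg (by omega), dif_neg (by omega),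
    sum_attach (range n) fun j ↦ nnacci n (i - n + j), sum_Ico_eq_sum_range,
    show i - (i - n) = n by omega]

lemma nnacci_add (hn : 0 < n) (j : ℕ) : nnacci n (j + n) = ∑ i ∈ Ico j (j + n), nnacci n i := by
  rw [nnacci_eq_sum_Ico (i := j + n) (by omega), Nat.add_sub_cancel]

lemma nnacci_mono (hn : 0 < n) : Monotone (nnacci n) := by
  refine monotone_nat_of_le_succ fun i ↦ ?_
  rcases lt_or_ge i (n - 1) with h | h
  · rw [nnacci_of_lt_sub_one h]
    exact Nat.zero_le _
  · rw [nnacci_eq_sum_Ico (i := i + 1) (by omega)]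
    exact single_le_sum (fun _ _ ↦ Nat.zero_le _) (mem_Ico.mpr ⟨by omega, by omega⟩)

lemma nnacci_add_add (hn : 0 < n) (j : ℕ) :
    nnacci n (j + n + n) = ∑ i ∈ Ico j (j + n), nnacci n (i + n) := by
  rw [nnacci_add hn, sum_Ico_add']

lemma nnacci_add_of_lt {j : ℕ} (h : j < n) :
    nnacci n (j + n) = 1 + ∑ i ∈ range j, nnacci n (i + n) := by
  have hlow : ∑ i ∈ Ico j n, nnacci n i = 1 := by
    rw [sum_eq_single_of_mem (n - 1) (mem_Ico.mpr ⟨by omega, by omega⟩) fun i hi hne ↦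
      nnacci_of_lt_sub_one (by rw [mem_Ico] at hi; omega)]
    exact nnacci_sub_one
  rw [nnacci_add (by omega), ← sum_Ico_consecutive _ h.le (by omega), hlow, range_eq_Ico,
    sum_Ico_add', Nat.zero_add]

lemma sum_range_add_nnacci (hn : 0 < n) (b : ℕ) :
    ∑ i ∈ range (b + n), nnacci n (i + n) =
      ∑ i ∈ range b, nnacci n (i + n) + nnacci n (b + n + n) := by
  rw [nnacci_add_add hn, sum_range_add_sum_Ico _ (by omega)]

lemma sum_Ico_lt_nnacci_add (hn : 0 < n) {a j : ℕ} (h : j < a + n) :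
    ∑ i ∈ Ico a j, nnacci n (i + n) < nnacci n (j + n) := by
  induction j using Nat.strong_induction_on generalizing a with
  | _ j ih =>
  rcases lt_or_ge j n with hj | hj
  · rw [nnacci_add_of_lt hj]
    have hsub : Ico a j ⊆ range j := fun i hi ↦ mem_range.2 (mem_Ico.1 hi).2
    have := sum_le_sum_of_subset (f := fun i ↦ nnacci n (i + n)) hsub
    omega
  · obtain ⟨p, rfl⟩ : ∃ p, j = p + n := ⟨j - n, by omega⟩
    have hp : 0 < nnacci n (p + n) := by simpa using ih p (by omega) (a := p) (by omega)
    have hsub := sum_le_sum_of_subset (f := fun i ↦ nnacci n (i + n))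
      (Ico_subset_Ico_left (show p + 1 ≤ a by omega) : Ico a (p + n) ⊆ Ico (p + 1) (p + n))
    rw [nnacci_add_add hn, sum_eq_sum_Ico_succ_bot (show p < p + n by omega)]
    omega

lemma nnacci_add_pos (hn : 0 < n) (j : ℕ) : 0 < nnacci n (j + n) := by
  simpa using sum_Ico_lt_nnacci_add hn (a := j) (j := j) (by omega)

end Nnacci

section SubsetSums

variable {α : Type*}

lemma exists_fin_of_forall_exists_subset_sum (A : Finset α) (v : α → ℕ) (hv : ∀ x ∈ A, 0 < v x)
    {S : Finset ℕ} (hS : ∀ s ∈ S, ∃ J ⊆ A, ∑ x ∈ J, v x = s) :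
    ∃ a : Fin #A → ℕ, (∀ i, 0 < a i) ∧ ∀ s ∈ S, ∃ I : Finset (Fin #A), ∑ i ∈ I, a i = s := by
  classical
  refine ⟨fun i ↦ v (A.equivFin.symm i), fun i ↦ hv _ (A.equivFin.symm i).2, fun s hs ↦ ?_⟩
  obtain ⟨J, hJA, rfl⟩ := hS s hs
  refine ⟨(J.subtype (· ∈ A)).map A.equivFin.toEmbedding, ?_⟩
  simp only [sum_map, Equiv.coe_toEmbedding, Equiv.symm_apply_apply]
  exact sum_subtype_of_mem (fun x ↦ v x) fun x hx ↦ hJA hx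

lemma CM_le_card_s15 (A : Finset α) (v : α → ℕ) (hv : ∀ x ∈ A, 0 < v x) {S : Finset ℕ}
    (hS : ∀ s ∈ S, ∃ J ⊆ A, ∑ x ∈ J, v x = s) : CM S ≤ #A :=
  Nat.sInf_le (exists_fin_of_forall_exists_subset_sum A v hv hS)

end SubsetSums

lemma exists_fin_CM (S : Finset ℕ) :
    ∃ a : Fin (CM S) → ℕ, (∀ i, 0 < a i) ∧
      ∀ s ∈ S, ∃ I : Finset (Fin (CM S)), ∑ i ∈ I, a i = s := by
  refine Nat.sInf_mem (s := {m : ℕ | ∃ a : Fin m → ℕ, (∀ i, 0 < a i) ∧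
    ∀ s ∈ S, ∃ I : Finset (Fin m), ∑ i ∈ I, a i = s})
    ⟨_, exists_fin_of_forall_exists_subset_sum {s ∈ S | 0 < s} id
      (fun s hs ↦ (mem_filter.1 hs).2) fun s hs ↦ ?_⟩
  rcases Nat.eq_zero_or_pos s with rfl | hs0
  · exact ⟨∅, empty_subset _, sum_empty⟩
  · exact ⟨{s}, singleton_subset_iff.2 (mem_filter.2 ⟨hs, hs0⟩), sum_singleton _ _⟩

lemma le_CM {S : Finset ℕ} {b : ℕ}
    (h : ∀ m (a : Fin m → ℕ), (∀ i, 0 < a i) → (∀ s ∈ S, ∃ I : Finset (Fin m), ∑ i ∈ I, a i = s) →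
      b ≤ m) : b ≤ CM S := by
  obtain ⟨a, ha, hS⟩ := exists_fin_CM S
  exact h _ a ha hS

section NewElements

variable {ι : Type*} [DecidableEq ι] (I : ℕ → Finset ι)

lemma card_filter_not_subset_biUnion_le (t : ℕ) :
    #{j ∈ range t | ¬ I j ⊆ (range j).biUnion I} ≤ #((range t).biUnion I) := by
  induction t with
  | zero => simp
  | succ t ih =>
    rw [range_add_one, filter_insert, biUnion_insert]
    split_ifs with h
    · exact ih.trans (card_le_card subset_union_right)
    · have hlt : #((range t).biUnion I) < #(I t ∪ (range t).biUnion I) :=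
        card_lt_card (subset_union_right.ssubset_of_not_subset fun h' ↦ h (union_subset_iff.1 h').1)
      rw [card_insert_of_notMem (by simp)]
      omega

lemma sum_biUnion_le_sum_filter_not_subset (a : ι → ℕ) (t : ℕ) :
    ∑ i ∈ (range t).biUnion I, a i ≤
      ∑ j ∈ range t with ¬ I j ⊆ (range j).biUnion I, ∑ i ∈ I j, a i := by
  induction t with
  | zero => simp
  | succ t ih =>
    rw [range_add_one, filter_insert, biUnion_insert]
    split_ifs with h
    · rwa [union_eq_right.2 h]
    · rw [sum_insert (by simp)]
      have := sum_union_inter (s₁ := I t) (s₂ := (range t).biUnion I) (f := a)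
      omega

end NewElements

section Bounds

variable {n k : ℕ}

lemma exists_subset_sum_eq_nnacci_add (hn : 0 < n) (j : ℕ) :
    ∃ J ⊆ ({i ∈ range (j + 1) | n ∣ i → i = 0} : Finset ℕ),
      ∑ i ∈ J, nnacci n (i + n) = nnacci n (j + n) := by
  induction j using Nat.strong_induction_on with
  | _ j ih =>
  by_cases hj : n ∣ j → j = 0
  · exact ⟨{j}, singleton_subset_iff.2 (mem_filter.2 ⟨self_mem_range_succ j, hj⟩),
      sum_singleton _ _⟩
  rw [Classical.not_imp] at hj
  obtain ⟨p, rfl⟩ : ∃ p, j = p + n :=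
    ⟨j - n, by have := Nat.le_of_dvd (Nat.pos_of_ne_zero hj.2) hj.1; omega⟩
  have hp : n ∣ p := (Nat.dvd_add_left (dvd_refl n)).1 hj.1
  obtain ⟨J, hJ, hsum⟩ := ih p (by omega)
  have hJp : J ⊆ range (p + 1) := hJ.trans (filter_subset _ _)
  refine ⟨J ∪ Ico (p + 1) (p + n),
    union_subset (hJ.trans (filter_subset_filter _ (by simp))) ?_, ?_⟩
  · intro i hi
    rw [mem_Ico] at hi
    refine mem_filter.2 ⟨mem_range.2 (by omega), fun hi' ↦ ?_⟩
    have := Nat.le_of_dvd (by omega) (Nat.dvd_sub hi' hp)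
    omega
  · rw [sum_union (disjoint_left.2 fun i hi hi' ↦ by
      have := mem_range.1 (hJp hi); rw [mem_Ico] at hi'; omega),
      hsum, nnacci_add_add hn, sum_eq_sum_Ico_succ_bot (show p < p + n by omega)]

lemma card_filter_dvd_imp_eq_zero :
    #{j ∈ range k | n ∣ j → j = 0} = k - (k - 1) / n := by
  have hmul : ({j ∈ range k | ¬(n ∣ j → j = 0)} : Finset ℕ) = {j ∈ Ioc 0 (k - 1) | n ∣ j} := by
    ext j
    simp only [mem_filter, mem_range, mem_Ioc]
    omega
  have := card_filter_add_card_filter_not (s := range k) (fun j ↦ n ∣ j → j = 0)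
  rw [hmul, Nat.Ioc_filter_dvd_card_eq_div, card_range] at this
  omega

lemma CM_image_nnacci_le (hn : 0 < n) :
    CM ((Icc n (n + k - 1)).image (nnacci n)) ≤ k - (k - 1) / n := by
  rw [← card_filter_dvd_imp_eq_zero]
  refine CM_le_card_s15 _ (fun j ↦ nnacci n (j + n)) (fun j _ ↦ nnacci_add_pos hn j) fun s hs ↦ ?_
  obtain ⟨i, hi, rfl⟩ := mem_image.1 hs
  rw [mem_Icc] at hi
  obtain ⟨J, hJ, hsum⟩ := exists_subset_sum_eq_nnacci_add hn (i - n)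
  refine ⟨J, hJ.trans (filter_subset_filter _ (range_subset_range.2 (by omega))), ?_⟩
  rw [hsum, Nat.sub_add_cancel hi.1]

variable {G : ℕ → Prop} [DecidablePred G]

lemma mul_card_filter_not_add_le (hn : 0 < n)
    (hG : ∀ j < k, ¬ G j → nnacci n (j + n) ≤ ∑ i ∈ range j with G i, nnacci n (i + n))
    {t : ℕ} (ht : t < k) (hfree : ¬ G t) (hle : n * #{j ∈ range t | ¬ G j} ≤ t)
    (hsum : ∑ i ∈ range (n * #{j ∈ range t | ¬ G j}), nnacci n (i + n) ≤
      ∑ i ∈ range t with ¬ G i, nnacci n (i + n)) :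
    n * #{j ∈ range t | ¬ G j} + n ≤ t := by
  by_contra! h
  have hsplit := sum_filter_add_sum_filter_not (range t) G fun i ↦ nnacci n (i + n)
  rw [← sum_range_add_sum_Ico _ hle] at hsplit
  have := sum_Ico_lt_nnacci_add hn h
  have := hG t ht hfree
  omega

lemma mul_card_filter_not_le_and_sum_range_le (hn : 0 < n)
    (hG : ∀ j < k, ¬ G j → nnacci n (j + n) ≤ ∑ i ∈ range j with G i, nnacci n (i + n))
    {t : ℕ} (ht : t ≤ k) :
    n * #{j ∈ range t | ¬ G j} ≤ t ∧ ∑ i ∈ range (n * #{j ∈ range t | ¬ G j}), nnacci n (i + n) ≤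
      ∑ i ∈ range t with ¬ G i, nnacci n (i + n) := by
  induction t with
  | zero => simp
  | succ t ih =>
    obtain ⟨hle, hsum⟩ := ih (by omega)
    rw [range_add_one, filter_insert]
    split_ifs with hfree
    · exact ⟨by omega, hsum⟩
    · have hgap := mul_card_filter_not_add_le hn hG (by omega) hfree hle hsum
      have hmono := nnacci_mono hn (show n * #{j ∈ range t | ¬ G j} + n + n ≤ t + n by omega)
      rw [card_insert_of_notMem (by simp), sum_insert (by simp), mul_add_one,
        sum_range_add_nnacci hn]
      omega

lemma sub_pred_div_le_card_filter (hn : 0 < n) (hk : 0 < k)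
    (hG : ∀ j < k, ¬ G j → nnacci n (j + n) ≤ ∑ i ∈ range j with G i, nnacci n (i + n)) :
    k - (k - 1) / n ≤ #{j ∈ range k | G j} := by
  obtain ⟨t, rfl⟩ : ∃ t, k = t + 1 := ⟨k - 1, by omega⟩
  obtain ⟨hle, hsum⟩ := mul_card_filter_not_le_and_sum_range_le hn hG (t := t) (by omega)
  have hfree : n * #{j ∈ range (t + 1) | ¬ G j} ≤ t := by
    rw [range_add_one, filter_insert]
    split_ifs with h
    · exact hle
    · rw [card_insert_of_notMem (by simp), mul_add_one]
      exact mul_card_filter_not_add_le hn hG (by omega) h hle hsum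
  have hcard := card_filter_add_card_filter_not (s := range (t + 1)) fun j ↦ G j
  have hdiv : #{j ∈ range (t + 1) | ¬ G j} ≤ t / n := (Nat.le_div_iff_mul_le hn).2 (by linarith)
  rw [card_range] at hcard
  rw [Nat.add_sub_cancel]
  omega

lemma sub_pred_div_le_card_of_forall_exists_sum_eq (hn : 0 < n) (hk : 0 < k) {ι : Type*}
    [Fintype ι] (a : ι → ℕ) (hrep : ∀ j < k, ∃ I : Finset ι, ∑ i ∈ I, a i = nnacci n (j + n)) :
    k - (k - 1) / n ≤ Fintype.card ι := by
  classical
  choose! I hI using hrep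
  calc k - (k - 1) / n ≤ #{j ∈ range k | ¬ I j ⊆ (range j).biUnion I} :=
        sub_pred_div_le_card_filter hn hk fun j hj hold ↦ ?_
    _ ≤ #((range k).biUnion I) := card_filter_not_subset_biUnion_le I k
    _ ≤ Fintype.card ι := card_le_univ _
  calc nnacci n (j + n) = ∑ i ∈ I j, a i := (hI j hj).symm
    _ ≤ ∑ i ∈ (range j).biUnion I, a i := sum_le_sum_of_subset (not_not.1 hold)
    _ ≤ ∑ i ∈ range j with ¬ I i ⊆ (range i).biUnion I, ∑ x ∈ I i, a x :=
        sum_biUnion_le_sum_filter_not_subset I a j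
    _ = _ := sum_congr rfl fun i hi ↦ hI i (by rw [mem_filter, mem_range] at hi; omega)

lemma sub_pred_div_le_CM_image_nnacci (hn : 0 < n) (hk : 0 < k) :
    k - (k - 1) / n ≤ CM ((Icc n (n + k - 1)).image (nnacci n)) :=
  le_CM fun m a _ hrep ↦ by
    simpa using sub_pred_div_le_card_of_forall_exists_sum_eq hn hk a fun j hj ↦
      hrep _ (mem_image.2 ⟨j + n, mem_Icc.2 ⟨by omega, by omega⟩, rfl⟩)

end Bounds

lemma sub_pred_div_eq {n k : ℕ} (hn : 0 < n) (hk : 0 < k) :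
    k - (k - 1) / n = (n - 1) * k / n + 1 := by
  obtain ⟨t, rfl⟩ : ∃ t, k = t + 1 := ⟨k - 1, by omega⟩
  obtain ⟨q, r, hr, rfl⟩ : ∃ q r, r < n ∧ t = n * q + r :=
    ⟨t / n, t % n, Nat.mod_lt t hn, (Nat.div_add_mod t n).symm⟩
  obtain ⟨d, rfl⟩ : ∃ d, n = r + d + 1 := ⟨n - r - 1, by omega⟩
  rw [Nat.add_sub_cancel, Nat.add_sub_cancel, Nat.mul_add_div hn, Nat.div_eq_of_lt hr,
    show (r + d) * ((r + d + 1) * q + r + 1) = (r + d + 1) * ((r + d) * q + r) + d by ring,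
    Nat.mul_add_div hn, Nat.div_eq_of_lt (show d < r + d + 1 by omega)]
  have hq : (r + d + 1) * q = (r + d) * q + q := by ring
  omega

/-- For the set `{N_n, N_{n+1}, …, N_{n+k-1}}` of `k` consecutive n-nacci numbers,
`CM(S) = ⌊(n−1)k/n⌋ + 1`. -/
theorem cm_nnacci (n : ℕ) (hn : 2 ≤ n) (k : ℕ) (hk : 0 < k) :
    CM ((Finset.Icc n (n + k - 1)).image (nnacci n)) = (n - 1) * k / n + 1 := by
  have hn₀ : 0 < n := by omega
  rw [← sub_pred_div_eq hn₀ hk]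
  exact le_antisymm (CM_image_nnacci_le hn₀) (sub_pred_div_le_CM_image_nnacci hn₀ hk)
end

section
/- Let S be a nonempty finite set of distinct positive integers that is two-powerful, i.e., S contains every power of 2 not exceeding max(S). Then CM(S) = ⌊log₂ max(S)⌋ + 1. -/
/-- Every `s < 2^n` is a sum of distinct powers of two with exponents below `n`. -/
lemma exists_subset_sum_pow : ∀ n : ℕ, ∀ s : ℕ, s < 2 ^ n →
    ∃ I : Finset (Fin n), ∑ i ∈ I, 2 ^ (i : ℕ) = s := by
  intro n
  induction n with
  | zero =>
    intro s hs
    interval_cases s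
    exact ⟨∅, by simp⟩
  | succ n ih =>
    intro s hs
    by_cases h : s < 2 ^ n
    · obtain ⟨I, hI⟩ := ih s h
      refine ⟨I.image Fin.castSucc, ?_⟩
      rw [Finset.sum_image (fun a _ b _ h => Fin.castSucc_injective n h)]
      simpa using hI
    · push_neg at h
      have ht : s - 2 ^ n < 2 ^ n := by
        have : s < 2 ^ n + 2 ^ n := by
          rw [pow_succ] at hs; omega
        omega
      obtain ⟨I, hI⟩ := ih (s - 2 ^ n) ht
      refine ⟨insert (Fin.last n) (I.image Fin.castSucc), ?_⟩
      rw [Finset.sum_insert (by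
        simp only [Finset.mem_image]
        rintro ⟨i, -, hi⟩
        exact absurd hi (Fin.castSucc_lt_last i).ne)]
      rw [Finset.sum_image (fun a _ b _ h => Fin.castSucc_injective n h)]
      simp only [Fin.val_last, Fin.coe_castSucc]
      omega

/-- If `S` is two-powerful (contains every power of 2 not exceeding `max S`),
then `CM(S) = ⌊log₂ (max S)⌋ + 1`. -/
theorem cm_two_powerful (S : Finset ℕ) (hne : S.Nonempty)
    (hpos : ∀ s ∈ S, 0 < s)
    (h2p : ∀ m : ℕ, 2 ^ m ≤ S.max' hne → 2 ^ m ∈ S) :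
    CM S = Nat.log 2 (S.max' hne) + 1 := by
  set M := S.max' hne with hMdef
  set L := Nat.log 2 M with hLdef
  have hM : 0 < M := hpos _ (S.max'_mem hne)
  have hmem : (L + 1) ∈ {n : ℕ | ∃ a : Fin n → ℕ, (∀ i, 0 < a i) ∧
      ∀ s ∈ S, ∃ I : Finset (Fin n), ∑ i ∈ I, a i = s} := by
    refine ⟨fun i => 2 ^ (i : ℕ), fun i => pow_pos two_pos _, ?_⟩
    intro s hs
    have h1 : s ≤ M := S.le_max' s hs
    have h2 : M < 2 ^ (L + 1) := Nat.lt_pow_succ_log_self one_lt_two M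
    exact exists_subset_sum_pow _ s (lt_of_le_of_lt h1 h2)
  refine le_antisymm (Nat.sInf_le hmem) (le_csInf ⟨_, hmem⟩ ?_)
  rintro n ⟨a, -, ha⟩
  -- for each k ≤ L, pick a subset of moves summing to 2^k
  have hsub : ∀ k, k ≤ L → ∃ I : Finset (Fin n), ∑ i ∈ I, a i = 2 ^ k := by
    intro k hk
    refine ha _ (h2p k ?_)
    calc 2 ^ k ≤ 2 ^ L := Nat.pow_le_pow_right two_pos hk
    _ ≤ M := Nat.pow_log_le_self 2 hM.ne'
  choose! g hg using hsub
  set U : ℕ → Finset (Fin n) := fun j => (Finset.range (j + 1)).biUnion g with hU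
  have key : ∀ j, j ≤ L → (∑ i ∈ U j, a i < 2 ^ (j + 1)) ∧ j + 1 ≤ (U j).card := by
    intro j
    induction j with
    | zero =>
      intro _
      have h0 : U 0 = g 0 := by simp [hU]
      constructor
      · rw [h0, hg 0 (Nat.zero_le L)]; norm_num
      · rw [h0]
        rcases Finset.eq_empty_or_nonempty (g 0) with h | h
        · exfalso; have := hg 0 (Nat.zero_le L); rw [h] at this; simp at this
        · exact Finset.Nonempty.card_pos h
    | succ j ihj =>
      intro hjL
      obtain ⟨ihsum, ihcard⟩ := ihj (Nat.le_of_succ_le hjL)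
      have hstep : U (j + 1) = g (j + 1) ∪ U j := by
        rw [hU]
        simp only
        rw [Finset.range_add_one, Finset.biUnion_insert]
      have hsum_g : ∑ i ∈ g (j + 1), a i = 2 ^ (j + 1) := hg (j + 1) hjL
      have hsum_union : ∑ i ∈ U (j + 1), a i ≤ ∑ i ∈ g (j + 1), a i + ∑ i ∈ U j, a i := by
        rw [hstep]
        calc ∑ i ∈ g (j + 1) ∪ U j, a i
            = ∑ i ∈ g (j + 1), a i + ∑ i ∈ U j \ g (j + 1), a i := by
              rw [← Finset.sum_union (Finset.disjoint_sdiff), Finset.union_sdiff_self_eq_union]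
        _ ≤ ∑ i ∈ g (j + 1), a i + ∑ i ∈ U j, a i := by
              gcongr
              exact Finset.sdiff_subset
      constructor
      · calc ∑ i ∈ U (j + 1), a i ≤ 2 ^ (j + 1) + ∑ i ∈ U j, a i := by
              rw [hsum_g] at hsum_union; exact hsum_union
        _ < 2 ^ (j + 1) + 2 ^ (j + 1) := by omega
        _ = 2 ^ (j + 2) := by ring
      · -- g (j+1) is not contained in U j
        have hnot : ¬ g (j + 1) ⊆ U j := by
          intro hss
          have := Finset.sum_le_sum_of_subset (f := a) hss
          rw [hsum_g] at this
          omega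
        obtain ⟨i, hi_g, hi_U⟩ := Finset.not_subset.mp hnot
        have hins : insert i (U j) ⊆ U (j + 1) := by
          rw [hstep]
          intro x hx
          rcases Finset.mem_insert.mp hx with rfl | hx
          · exact Finset.mem_union_left _ hi_g
          · exact Finset.mem_union_right _ hx
        have := Finset.card_le_card hins
        rw [Finset.card_insert_of_notMem hi_U] at this
        omega
  have hcard : L + 1 ≤ (U L).card := (key L le_rfl).2
  have : (U L).card ≤ n := by
    simpa using Finset.card_le_univ (U L)
  omega
end

section
/- For all positive integers m and k with m ≤ k < 2^m, there exists a set S of k distinct positive integers such that CM(S) = m; that is, every value between the lower bound ⌊log₂ k⌋ + 1 and the upper bound k is attained as a Cookie Monster number of a set of k jars. -/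
/-!
Put the `m` powers `1, 2, …, 2^(m-1)` into `S` and fill it up to `k` elements with other numbers
below `2^m`. The moves `1, 2, …, 2^(m-1)` empty every jar by binary expansion, so `CM S ≤ m`.
Conversely, the powers of two are superincreasing: `2^j` exceeds the sum of all smaller powers,
so the moves used for `2^j` cannot all be among those used for `1, …, 2^(j-1)`. Choosing a new
move for each `j` gives `m` distinct moves.
-/

open Finset

def CanEmpty (S : Finset ℕ) (n : ℕ) : Prop :=
  ∃ a : Fin n → ℕ, (∀ i, 0 < a i) ∧ ∀ s ∈ S, ∃ I : Finset (Fin n), ∑ i ∈ I, a i = s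

theorem CM_eq_of_isLeast {S : Finset ℕ} {m : ℕ} (h : IsLeast {n | CanEmpty S n} m) :
    CM S = m :=
  h.csInf_eq

theorem exists_subset_sum_two_pow {m s : ℕ} (hs : s < 2 ^ m) :
    ∃ I : Finset (Fin m), ∑ i ∈ I, 2 ^ (i : ℕ) = s := by
  have hbits : ∀ i ∈ s.bitIndices.toFinset, i < m := fun i hi =>
    (Nat.pow_lt_pow_iff_right one_lt_two).1
      ((Nat.two_pow_le_of_mem_bitIndices (List.mem_toFinset.1 hi)).trans_lt hs)
  refine ⟨s.bitIndices.toFinset.attachFin hbits, ?_⟩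
  rw [← sum_image (fun _ _ _ _ => Fin.ext), image_val_attachFin,
    sum_toFinset_bitIndices_two_pow]

theorem canEmpty_of_forall_lt_two_pow {S : Finset ℕ} {m : ℕ} (hS : ∀ s ∈ S, s < 2 ^ m) :
    CanEmpty S m :=
  ⟨fun i => 2 ^ (i : ℕ), fun _ => Nat.two_pow_pos _,
    fun s hs => exists_subset_sum_two_pow (hS s hs)⟩

theorem le_card_of_superincreasing_subset_sums {ι : Type*} [Fintype ι] (a : ι → ℕ)
    {m : ℕ} (x : ℕ → ℕ) (hx : ∀ j < m, ∑ i ∈ range j, x i < x j)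
    (hsum : ∀ j < m, ∃ I : Finset ι, ∑ i ∈ I, a i = x j) : m ≤ Fintype.card ι := by
  classical
  choose! I hI using hsum
  have hnew : ∀ j : Fin m, ∃ e ∈ I j, e ∉ (range j).sup I := by
    intro ⟨j, hj⟩
    by_contra! hsub
    have hsup : ∑ i ∈ (range j).sup I, a i ≤ ∑ i ∈ range j, ∑ e ∈ I i, a e :=
      apply_sup_le_sum (f := fun U : Finset ι => ∑ e ∈ U, a e) sum_empty
        (fun {s t} => (Nat.le_add_right _ _).trans_eq sum_union_inter) _
    have hprev : ∑ i ∈ range j, ∑ e ∈ I i, a e = ∑ i ∈ range j, x i :=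
      sum_congr rfl fun i hi => hI i ((mem_range.1 hi).trans hj)
    refine (hx j hj).not_ge ?_
    calc x j = ∑ e ∈ I j, a e := (hI j hj).symm
      _ ≤ ∑ e ∈ (range j).sup I, a e := sum_le_sum_of_subset hsub
      _ ≤ ∑ i ∈ range j, x i := hsup.trans_eq hprev
  choose e heI heNew using hnew
  have hinj : Function.Injective e := by
    intro i j hij
    by_contra hne
    rcases lt_or_gt_of_ne hne with hlt | hlt
    · exact heNew j (hij ▸ mem_sup.2 ⟨i, mem_range.2 hlt, heI i⟩)
    · exact heNew i (hij ▸ mem_sup.2 ⟨j, mem_range.2 hlt, heI j⟩)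
  simpa using Fintype.card_le_of_injective e hinj

theorem le_of_canEmpty_of_two_pow_mem {S : Finset ℕ} {m n : ℕ} (hS : ∀ j < m, 2 ^ j ∈ S)
    (hn : CanEmpty S n) : m ≤ n := by
  obtain ⟨a, -, ha⟩ := hn
  simpa using le_card_of_superincreasing_subset_sums a (fun j => 2 ^ j)
    (fun j _ => Nat.geomSum_lt le_rfl fun _ => mem_range.1) (fun j hj => ha _ (hS j hj))

theorem cm_every_value_attained_general (m k : ℕ) (hmk : m ≤ k)
    (hk : k < 2 ^ m) :
    ∃ S : Finset ℕ, (∀ s ∈ S, 0 < s) ∧ S.card = k ∧ CM S = m := by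
  have hpow : (range m).map ⟨(2 ^ ·), Nat.pow_right_injective le_rfl⟩ ⊆ Ioo 0 (2 ^ m) := by
    simp only [subset_iff, mem_map, mem_range, mem_Ioo]
    rintro _ ⟨j, hj, rfl⟩
    exact ⟨Nat.two_pow_pos j, Nat.pow_lt_pow_right one_lt_two hj⟩
  obtain ⟨S, hpowS, hS, hcard⟩ := exists_subsuperset_card_eq hpow (by simpa using hmk)
    (by simp only [Nat.card_Ioo]; omega)
  refine ⟨S, fun s hs => (mem_Ioo.1 (hS hs)).1, hcard, CM_eq_of_isLeast ⟨?_, ?_⟩⟩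
  · exact canEmpty_of_forall_lt_two_pow fun s hs => (mem_Ioo.1 (hS hs)).2
  · exact fun n => le_of_canEmpty_of_two_pow_mem fun j hj =>
      hpowS (mem_map.2 ⟨j, mem_range.2 hj, rfl⟩)

/-- For all positive integers `m ≤ k < 2^m`, there is a set of `k` jars whose
Cookie Monster number is exactly `m`. -/
theorem cm_every_value_attained (m k : ℕ) (hm : 0 < m) (hmk : m ≤ k)
    (hk : k < 2 ^ m) :
    ∃ S : Finset ℕ, (∀ s ∈ S, 0 < s) ∧ S.card = k ∧ CM S = m :=
  cm_every_value_attained_general m k hmk hk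
end

section
/- For every real number r with 0 ≤ r ≤ 1, there exists a strictly increasing sequence s_1 < s_2 < s_3 < … of positive integers such that, writing S_k = {s_1, s_2, …, s_k}, the ratio CM(S_k)/k tends to r as k tends to infinity. -/
/-!
Put index `i` into block `B i = ⌊r i⌋` and let the `i`-th jar be `H (B i) + i`, where the block
bases `H` grow so fast that the first jars `t_0 < t_1 < ⋯` of the blocks satisfy
`(j + 1) t_j < t_{j+1}`. Such targets need one move each: with only `j` moves, `t_j` is a sum of
at most `j` of them, so one of its moves exceeds `t_{j-1}` and is useless for every earlier
target; discarding it and inducting gives a contradiction. Conversely the first jars of the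
blocks together with the powers `2^0, …, 2^⌊log₂ k⌋` empty `S_{k+1}`, since every jar is the
first jar of its block plus an offset at most `k`. Hence
`⌊r k⌋ + 1 ≤ CM S_{k+1} ≤ ⌊r k⌋ + log₂ k + 2`.
-/

open Finset Filter Topology Pointwise

def Empties {ι : Type*} (S : Finset ℕ) (a : ι → ℕ) : Prop :=
  (∀ i, 0 < a i) ∧ ∀ s ∈ S, ∃ I : Finset ι, ∑ i ∈ I, a i = s

section Empties

variable {ι κ : Type*} {S T : Finset ℕ} {a : ι → ℕ} {b : κ → ℕ}

lemma Empties.comp_equiv (h : Empties S a) (e : κ ≃ ι) : Empties S (a ∘ e) := by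
  refine ⟨fun i => h.1 (e i), fun s hs => ?_⟩
  obtain ⟨I, rfl⟩ := h.2 s hs
  exact ⟨I.map e.symm.toEmbedding, by simp [sum_map]⟩

lemma Empties.mono (h : Empties T a) (hST : S ⊆ T) : Empties S a :=
  ⟨h.1, fun s hs => h.2 s (hST hs)⟩

lemma Empties.add (ha : Empties S a) (hb : Empties T b) : Empties (S + T) (Sum.elim a b) := by
  refine ⟨fun i => by cases i <;> simp [ha.1, hb.1], fun s hs => ?_⟩
  obtain ⟨x, hx, y, hy, rfl⟩ := mem_add.mp hs
  obtain ⟨I, rfl⟩ := ha.2 x hx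
  obtain ⟨J, rfl⟩ := hb.2 y hy
  exact ⟨I.disjSum J, by simp [sum_disjSum]⟩

lemma empties_image_range {f : ℕ → ℕ} (hf : ∀ j, 0 < f j) (n : ℕ) :
    Empties ((range n).image f) (fun j : Fin n => f j) := by
  refine ⟨fun j => hf j, fun s hs => ?_⟩
  obtain ⟨j, hj, rfl⟩ := mem_image.mp hs
  exact ⟨{⟨j, mem_range.mp hj⟩}, by simp⟩

lemma empties_range_two_pow (T : ℕ) :
    Empties (range (2 ^ T)) (fun i : Fin T => 2 ^ (i : ℕ)) := by
  refine ⟨fun _ => by positivity, fun n hn => ?_⟩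
  have hlt : ∀ i ∈ n.bitIndices.toFinset, i < T := fun i hi =>
    (Nat.pow_lt_pow_iff_right one_lt_two).mp
      ((Nat.two_pow_le_of_mem_bitIndices (List.mem_toFinset.mp hi)).trans_lt (mem_range.mp hn))
  refine ⟨n.bitIndices.toFinset.attachFin hlt, ?_⟩
  conv_rhs => rw [← sum_toFinset_bitIndices_two_pow n, ← map_valEmbedding_attachFin hlt, sum_map]
  rfl

lemma empties_self (S : Finset ℕ) : Empties S (fun s : S => max (s : ℕ) 1) := by
  refine ⟨fun _ => by positivity, fun s hs => ?_⟩
  rcases Nat.eq_zero_or_pos s with rfl | hpos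
  · exact ⟨∅, rfl⟩
  · exact ⟨{⟨s, hs⟩}, by rw [sum_singleton]; exact max_eq_left hpos⟩

lemma CM_le [Fintype ι] (h : Empties S a) : CM S ≤ Fintype.card ι :=
  Nat.sInf_le ⟨_, h.comp_equiv (Fintype.equivFin ι).symm⟩

lemma exists_empties_CM (S : Finset ℕ) : ∃ a : Fin (CM S) → ℕ, Empties S a :=
  Nat.sInf_mem (s := {n | ∃ a : Fin n → ℕ, Empties S a})
    ⟨_, _, (empties_self S).comp_equiv (Fintype.equivFin S).symm⟩

end Empties

lemma le_card_of_fast_growing_sums {ι : Type*} [DecidableEq ι] (a : ι → ℕ) {t : ℕ → ℕ}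
    (ht0 : 0 < t 0) (ht : ∀ j, (j + 1) * t j < t (j + 1)) :
    ∀ (b : ℕ) (A : Finset ι), (∀ j < b, ∃ I ⊆ A, ∑ i ∈ I, a i = t j) → b ≤ #A
  | 0, _, _ => Nat.zero_le _
  | b + 1, A, hA => by
    by_contra! hcard
    have hmono : StrictMono t :=
      strictMono_nat_of_lt_succ fun j => (Nat.le_mul_of_pos_left _ j.succ_pos).trans_lt (ht j)
    obtain ⟨I, hIA, hI⟩ := hA b (by omega)
    have hIcard : #I ≤ b := (card_le_card hIA).trans (by omega)
    have hgap : ∑ _i ∈ I, t (b - 1) < ∑ i ∈ I, a i := by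
      rw [sum_const, smul_eq_mul, hI]
      rcases b with _ | b
      · rw [Nat.le_zero.mp hIcard, zero_mul]
        exact ht0
      · exact (Nat.mul_le_mul_right _ hIcard).trans_lt (ht b)
    obtain ⟨i₀, hi₀I, hi₀⟩ := exists_lt_of_sum_lt hgap
    have hrest : ∀ j < b, ∃ J ⊆ A.erase i₀, ∑ i ∈ J, a i = t j := by
      intro j hj
      obtain ⟨J, hJA, hJ⟩ := hA j (by omega)
      refine ⟨J, fun i hi => mem_erase.mpr ⟨?_, hJA hi⟩, hJ⟩
      rintro rfl
      have : a i ≤ t j := hJ ▸ single_le_sum (fun _ _ => Nat.zero_le _) hi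
      have : t j ≤ t (b - 1) := hmono.monotone (by omega)
      omega
    have := le_card_of_fast_growing_sums a ht0 ht b _ hrest
    rw [card_erase_of_mem (hIA hi₀I)] at this
    have := card_pos.mpr ⟨i₀, hIA hi₀I⟩
    omega

lemma le_CM_of_fast_growing {S : Finset ℕ} {t : ℕ → ℕ} (ht0 : 0 < t 0)
    (ht : ∀ j, (j + 1) * t j < t (j + 1)) {b : ℕ} (hS : ∀ j < b, t j ∈ S) : b ≤ CM S := by
  classical
  obtain ⟨a, -, ha⟩ := exists_empties_CM S
  simpa using le_card_of_fast_growing_sums a ht0 ht b univ fun j hj =>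
    (ha _ (hS j hj)).imp fun I hI => ⟨subset_univ I, hI⟩

section Blocks

variable (B : ℕ → ℕ)

noncomputable def blockStart (m : ℕ) : ℕ := sInf {i | m ≤ B i}

noncomputable def blockBase : ℕ → ℕ
  | 0 => 1
  | j + 1 => (j + 1) * (blockBase j + blockStart B j) + 1

noncomputable def cookieSeq (i : ℕ) : ℕ := blockBase B (B i) + i

variable {B}

lemma blockStart_le {m i : ℕ} (h : m ≤ B i) : blockStart B m ≤ i := Nat.sInf_le h

lemma apply_blockStart (hB0 : B 0 = 0) (hB1 : ∀ i, B (i + 1) ≤ B i + 1) {m i : ℕ}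
    (h : m ≤ B i) : B (blockStart B m) = m := by
  have hmem : m ≤ B (blockStart B m) := Nat.sInf_mem (s := {i | m ≤ B i}) ⟨i, h⟩
  rcases hp : blockStart B m with _ | p <;> rw [hp] at hmem
  · omega
  · have : ¬ m ≤ B p :=
      Nat.notMem_of_lt_sInf (s := {i | m ≤ B i}) (show p < blockStart B m by omega)
    have := hB1 p
    omega

variable (B)

lemma blockBase_pos (j : ℕ) : 0 < blockBase B j := by
  cases j <;> simp [blockBase]

lemma blockBase_strictMono : StrictMono (blockBase B) :=
  strictMono_nat_of_lt_succ fun j => Nat.lt_succ_of_le <|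
    (Nat.le_add_right _ _).trans (Nat.le_mul_of_pos_left _ j.succ_pos)

lemma cookieSeq_strictMono (hB : Monotone B) : StrictMono (cookieSeq B) :=
  strictMono_nat_of_lt_succ fun i => Nat.add_lt_add_of_le_of_lt
    ((blockBase_strictMono B).monotone (hB i.le_succ)) i.lt_succ_self

lemma cookieSeq_pos (i : ℕ) : 0 < cookieSeq B i :=
  Nat.add_pos_left (blockBase_pos B _) i

lemma CM_cookieSeq_le (hB : Monotone B) (k : ℕ) :
    CM ((range (k + 1)).image (cookieSeq B)) ≤ B k + 1 + (Nat.log 2 k + 1) := by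
  set leader : ℕ → ℕ := fun j => blockBase B j + blockStart B j
  have hleaders := empties_image_range (f := leader)
    (fun j => Nat.add_pos_left (blockBase_pos B j) _) (B k + 1)
  have hsub : (range (k + 1)).image (cookieSeq B) ⊆
      (range (B k + 1)).image leader + range (2 ^ (Nat.log 2 k + 1)) := by
    intro s hs
    obtain ⟨i, hi, rfl⟩ := mem_image.mp hs
    have hik : i ≤ k := Nat.lt_succ_iff.mp (mem_range.mp hi)
    have hstart : blockStart B (B i) ≤ i := blockStart_le le_rfl
    have hk := Nat.lt_pow_succ_log_self one_lt_two k
    refine mem_add.mpr ⟨_, mem_image_of_mem _ (mem_range.mpr (Nat.lt_succ_of_le (hB hik))),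
      i - blockStart B (B i), mem_range.mpr (by omega), ?_⟩
    simp only [leader, cookieSeq]
    omega
  simpa using CM_le ((hleaders.add (empties_range_two_pow _)).mono hsub)

lemma le_CM_cookieSeq (hB0 : B 0 = 0) (hB1 : ∀ i, B (i + 1) ≤ B i + 1) (k : ℕ) :
    B k + 1 ≤ CM ((range (k + 1)).image (cookieSeq B)) := by
  refine le_CM_of_fast_growing (t := fun j => blockBase B j + blockStart B j)
    (Nat.add_pos_left (blockBase_pos B 0) _)
    (fun j => (Nat.lt_succ_self _).trans_le (Nat.le_add_right _ _)) fun j hj => ?_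
  have hj : j ≤ B k := Nat.lt_succ_iff.mp hj
  refine mem_image.mpr ⟨blockStart B j, mem_range.mpr (Nat.lt_succ_of_le (blockStart_le hj)), ?_⟩
  simp only [cookieSeq, apply_blockStart hB0 hB1 hj]

end Blocks

lemma floor_mul_succ_le {r : ℝ} (h0 : 0 ≤ r) (h1 : r ≤ 1) (i : ℕ) :
    ⌊r * (i + 1 : ℕ)⌋₊ ≤ ⌊r * i⌋₊ + 1 := by
  rw [← Nat.floor_add_one (by positivity)]
  exact Nat.floor_le_floor (by push_cast; nlinarith)

lemma tendsto_log_two_add_two_div :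
    Tendsto (fun k : ℕ => ((Nat.log 2 k : ℝ) + 2) / (k + 1)) atTop (𝓝 0) := by
  have hlog : Tendsto (fun x : ℝ => Real.log x / (x + 1)) atTop (𝓝 0) := by
    simpa using Real.tendsto_pow_log_div_mul_add_atTop 1 1 1 one_ne_zero
  have hinv : Tendsto (fun x : ℝ => 2 / (x + 1)) atTop (𝓝 0) :=
    tendsto_const_nhds.div_atTop (tendsto_atTop_add_const_right _ 1 tendsto_id)
  have hsum := ((hlog.div_const (Real.log 2)).add hinv).comp tendsto_natCast_atTop_atTop
  rw [zero_div, zero_add] at hsum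
  refine squeeze_zero (fun k => by positivity) (fun k => ?_) hsum
  have := Real.natLog_le_logb k 2
  simp only [Function.comp, Real.logb, Nat.cast_ofNat] at this ⊢
  rw [div_right_comm, ← add_div]
  gcongr

lemma tendsto_div_of_floor_bounds {r : ℝ} (h0 : 0 ≤ r) (h1 : r ≤ 1) {c : ℕ → ℕ}
    (hlow : ∀ k : ℕ, ⌊r * k⌋₊ + 1 ≤ c k)
    (hup : ∀ k : ℕ, c k ≤ ⌊r * k⌋₊ + 1 + (Nat.log 2 k + 1)) :
    Tendsto (fun k : ℕ => (c k : ℝ) / ((k : ℝ) + 1)) atTop (𝓝 r) := by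
  refine tendsto_of_tendsto_of_tendsto_of_le_of_le (g := fun k : ℕ => r - 1 / ((k : ℝ) + 1))
    (h := fun k : ℕ => r + ((Nat.log 2 k : ℝ) + 2) / ((k : ℝ) + 1))
    (by simpa using (tendsto_const_nhds (x := r)).sub tendsto_one_div_add_atTop_nhds_zero_nat)
    (by simpa using (tendsto_const_nhds (x := r)).add tendsto_log_two_add_two_div)
    (fun k => ?_) (fun k => ?_)
  · have hfloor := Nat.lt_floor_add_one (r * k)
    have hc : ((⌊r * k⌋₊ + 1 : ℕ) : ℝ) ≤ c k := by exact_mod_cast hlow k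
    push_cast at hc
    calc r - 1 / ((k : ℝ) + 1) = (r * (k + 1) - 1) / (k + 1) := by field_simp
      _ ≤ c k / (k + 1) := by gcongr; linarith
  · have hfloor := Nat.floor_le (a := r * k) (by positivity)
    have hc : (c k : ℝ) ≤ ((⌊r * k⌋₊ + 1 + (Nat.log 2 k + 1) : ℕ) : ℝ) := by exact_mod_cast hup k
    push_cast at hc
    calc (c k : ℝ) / (k + 1) ≤ (r * (k + 1) + (Nat.log 2 k + 2)) / (k + 1) := by
          gcongr; nlinarith
      _ = r + ((Nat.log 2 k : ℝ) + 2) / ((k : ℝ) + 1) := by field_simp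

/-- For every real `0 ≤ r ≤ 1` there is a strictly increasing sequence of positive
integers whose initial segments `S_k` satisfy `CM(S_k)/k → r` as `k → ∞`. -/
theorem cm_ratio_any_real (r : ℝ) (h0 : 0 ≤ r) (h1 : r ≤ 1) :
    ∃ s : ℕ → ℕ, StrictMono s ∧ (∀ i, 0 < s i) ∧
      Filter.Tendsto (fun k : ℕ => (CM ((Finset.range k).image s) : ℝ) / k)
        Filter.atTop (nhds r) := by
  set B : ℕ → ℕ := fun i => ⌊r * i⌋₊
  have hB : Monotone B := fun i j hij => Nat.floor_le_floor (by gcongr)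
  refine ⟨cookieSeq B, cookieSeq_strictMono B hB, cookieSeq_pos B, ?_⟩
  rw [← tendsto_add_atTop_iff_nat 1]
  push_cast
  exact tendsto_div_of_floor_bounds h0 h1
    (le_CM_cookieSeq B (by simp [B]) (floor_mul_succ_le h0 h1)) (CM_cookieSeq_le B hB)
end
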